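/- arXiv:0805.2214 — 6 statements merged into one kernel-verified Lean document; each statement's English description precedes it below -/
import Mathlib

section
/- Suppose E[log⁺|g(ε₀)|] < ∞, E[log⁺|c(ε₀)|] < ∞ and E[log|c(ε₀)|] < 0 (the last expectation possibly equal to −∞). Then for every k ∈ ℤ the series X_k = ∑_{i=1}^∞ g(ε_{k−i}) ∏_{1≤j<i} c(ε_{k−j}) converges with probability one, the sequence (X_k)_{k∈ℤ} satisfies X_k = c(ε_{k−1})X_{k−1} + g(ε_{k−1}) almost surely for every k, and (X_k)_{k∈ℤ} is strictly stationary, i.e. for every n ≥ 1 and every k ∈ ℤ the random vector (X_{k+1}, …, X_{k+n}) has the same distribution as (X_1, …, X_n). -/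
/-!
Write `Y_j = log |c(ε_{k-1-j})|`. Truncating `Y` from below at a large level `-M` keeps its mean
negative but makes it integrable, so the strong law of large numbers gives
`∑_{j<i} Y_j ≤ γ i` eventually, for some `γ < 0`, almost surely. Since `log⁺ |g(ε₀)|` is
integrable, Borel–Cantelli gives `log⁺ |g(ε_{k-1-i})| ≤ -γ i / 2` eventually. Hence the `i`-th term
of the series is eventually at most `exp(γ / 2)^i`, and the series converges absolutely.
The recurrence is the splitting of the first term. For stationarity, `X_k` is one fixed
measurable functional of the shifted sequence `(ε_{k+z})_z`, whose law is the product measure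
`infinitePi` whatever `k` is.
-/

open MeasureTheory ProbabilityTheory Filter
open Topology Finset Real
open scoped ENNReal

lemma Real.log_max_abs_one (x : ℝ) : log (max |x| 1) = log⁺ x := by
  rw [max_comm, ← posLog_eq_log_max_one (abs_nonneg x), posLog_abs]

lemma summable_mul_prod_of_eventually_log_le {a b : ℕ → ℝ} {δ γ : ℝ}
    (ha : ∀ᶠ i in atTop, log⁺ (a i) ≤ δ * i)
    (hb : ∀ᶠ i in atTop, ∑ j ∈ range i, log |b j| ≤ γ * i) (hδγ : δ + γ < 0) :
    Summable fun i => a i * ∏ j ∈ range i, b j := by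
  refine Summable.of_norm_bounded_eventually
    (summable_geometric_of_lt_one (exp_pos (δ + γ)).le (exp_lt_one_iff.mpr hδγ)) ?_
  rw [Nat.cofinite_eq_atTop]
  filter_upwards [ha, hb] with i hai hbi
  have hpow : exp (δ + γ) ^ i = exp (δ * i) * exp (γ * i) := by
    rw [← exp_nat_mul, ← exp_add]; ring_nf
  have habs_a : |a i| ≤ exp (δ * i) :=
    calc |a i| ≤ max 1 |a i| := le_max_right _ _
      _ = exp (log⁺ (a i)) := by
        rw [← posLog_abs, posLog_eq_log_max_one (abs_nonneg _), exp_log (by positivity)]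
      _ ≤ exp (δ * i) := exp_le_exp.mpr hai
  have habs_b : ∏ j ∈ range i, |b j| ≤ exp (γ * i) :=
    calc ∏ j ∈ range i, |b j| ≤ ∏ j ∈ range i, exp (log |b j|) :=
          prod_le_prod (fun _ _ => abs_nonneg _) fun j _ => le_exp_log _
      _ = exp (∑ j ∈ range i, log |b j|) := (exp_sum _ _).symm
      _ ≤ exp (γ * i) := exp_le_exp.mpr hbi
  rw [Real.norm_eq_abs, abs_mul, abs_prod, hpow]
  exact mul_le_mul habs_a habs_b (prod_nonneg fun _ _ => abs_nonneg _) (exp_pos _).le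

section Probability

variable {Ω : Type*} [MeasurableSpace Ω] {P : Measure Ω}

lemma exists_integral_max_neg_natCast_lt_zero [IsFiniteMeasure P] {Y : Ω → ℝ}
    (hY : AEMeasurable Y P) (hpos : Integrable (fun ω => max (Y ω) 0) P)
    (hneg : ∫⁻ ω, ENNReal.ofReal (Y ω) ∂P < ∫⁻ ω, ENNReal.ofReal (-Y ω) ∂P) :
    ∃ M : ℕ, Integrable (fun ω => max (Y ω) (-M)) P ∧ ∫ ω, max (Y ω) (-M) ∂P < 0 := by
  have hlim : Tendsto (fun M : ℕ => ∫⁻ ω, ENNReal.ofReal (-max (Y ω) (-M)) ∂P) atTop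
      (𝓝 (∫⁻ ω, ENNReal.ofReal (-Y ω) ∂P)) := by
    refine lintegral_tendsto_of_tendsto_of_monotone (fun M => by fun_prop)
      (ae_of_all _ fun ω M N hMN => ?_) (ae_of_all _ fun ω => ?_)
    · exact ENNReal.ofReal_le_ofReal (neg_le_neg (max_le_max le_rfl (by simpa using hMN)))
    · refine tendsto_const_nhds.congr' ?_
      filter_upwards [eventually_ge_atTop ⌈-Y ω⌉₊] with M hM
      rw [max_eq_left (by linarith [Nat.ceil_le.mp hM])]
  obtain ⟨M, hM⟩ := (hlim.eventually (lt_mem_nhds hneg)).exists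
  have hint : Integrable (fun ω => max (Y ω) (-M)) P := by
    refine (hpos.add (integrable_const (M : ℝ))).mono' (by fun_prop) (ae_of_all _ fun ω => ?_)
    rw [Real.norm_eq_abs, abs_le, Pi.add_apply]
    have := max_le_max (le_refl (Y ω)) (neg_nonpos.mpr (Nat.cast_nonneg (α := ℝ) M))
    constructor <;> linarith [le_max_right (Y ω) 0, le_max_right (Y ω) (-M)]
  refine ⟨M, hint, ?_⟩
  have hpos_part : ∀ ω, ENNReal.ofReal (max (Y ω) (-M)) = ENNReal.ofReal (Y ω) := fun ω => by
    simp [ENNReal.ofReal_of_nonpos (neg_nonpos.mpr (Nat.cast_nonneg (α := ℝ) M))]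
  have hneg_fin : ∫⁻ ω, ENNReal.ofReal (-max (Y ω) (-M)) ∂P ≠ ∞ :=
    hint.neg.lintegral_lt_top.ne
  rw [integral_eq_lintegral_pos_part_sub_lintegral_neg_part hint, sub_neg,
    lintegral_congr hpos_part]
  exact (ENNReal.toReal_lt_toReal (hM.trans_le le_top).ne hneg_fin).mpr hM

lemma exists_neg_ae_eventually_sum_le_mul [IsProbabilityMeasure P] {Y : ℕ → Ω → ℝ}
    {Y₀ : Ω → ℝ} (hindep : Pairwise fun i j => IndepFun (Y i) (Y j) P)
    (hident : ∀ j, IdentDistrib (Y j) Y₀ P P) (hpos : Integrable (fun ω => max (Y₀ ω) 0) P)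
    (hneg : ∫⁻ ω, ENNReal.ofReal (Y₀ ω) ∂P < ∫⁻ ω, ENNReal.ofReal (-Y₀ ω) ∂P) :
    ∃ γ < 0, ∀ᵐ ω ∂P, ∀ᶠ n : ℕ in atTop, ∑ j ∈ range n, Y j ω ≤ γ * n := by
  obtain ⟨M, hint, hmean⟩ :=
    exists_integral_max_neg_natCast_lt_zero (hident 0).aemeasurable_snd hpos hneg
  set φ : ℝ → ℝ := fun y => max y (-M)
  have hφ : Measurable φ := measurable_id.max measurable_const
  have hW : ∀ j, IdentDistrib (φ ∘ Y j) (φ ∘ Y₀) P P := fun j => (hident j).comp hφ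
  have hslln := strong_law_ae_real (fun j => φ ∘ Y j) ((hW 0).integrable_iff.mpr hint)
    (fun i j hij => (hindep hij).comp hφ hφ) fun j => (hW j).trans (hW 0).symm
  set m := ∫ ω, (φ ∘ Y₀) ω ∂P
  have hm : m < 0 := hmean
  refine ⟨m / 2, by linarith, ?_⟩
  filter_upwards [hslln] with ω hω
  rw [(hW 0).integral_eq] at hω
  filter_upwards [hω.eventually (gt_mem_nhds (by linarith : m < m / 2)),
    eventually_gt_atTop 0] with n hn hn0
  rw [div_lt_iff₀ (by exact_mod_cast hn0)] at hn
  calc ∑ j ∈ range n, Y j ω ≤ ∑ j ∈ range n, φ (Y j ω) :=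
        sum_le_sum fun j _ => le_max_left _ _
    _ ≤ _ := hn.le

lemma ae_eventually_le_mul_of_identDistrib [IsProbabilityMeasure P] {Z : ℕ → Ω → ℝ} {Z₀ : Ω → ℝ}
    (hident : ∀ j, IdentDistrib (Z j) Z₀ P P) (hint : Integrable Z₀ P) (hnonneg : 0 ≤ Z₀)
    {δ : ℝ} (hδ : 0 < δ) : ∀ᵐ ω ∂P, ∀ᶠ j : ℕ in atTop, Z j ω ≤ δ * j := by
  let : MeasureSpace Ω := ⟨P⟩
  have : IsProbabilityMeasure (ℙ : Measure Ω) := ‹_›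
  have hsum : ∑' j : ℕ, P {ω | Z j ω / δ ∈ Set.Ioi (j : ℝ)} < ∞ :=
    (tsum_congr fun j => ((hident j).comp (measurable_id.div_const δ)).measure_mem_eq
      measurableSet_Ioi).trans_lt
      (tsum_prob_mem_Ioi_lt_top (hint.div_const δ) fun ω => div_nonneg (hnonneg ω) hδ.le)
  filter_upwards [ae_eventually_notMem hsum.ne] with ω hω
  filter_upwards [hω] with j hj
  simpa [div_le_iff₀ hδ, mul_comm] using hj

lemma map_comp_shift_eq_map [IsProbabilityMeasure P] {E β : Type*} [MeasurableSpace E]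
    [MeasurableSpace β] {ε : ℤ → Ω → E} (hε : ∀ k, Measurable (ε k)) (hindep : iIndepFun ε P)
    (hident : ∀ k, IdentDistrib (ε k) (ε 0) P P) {Φ : (ℤ → E) → β} (hΦ : Measurable Φ)
    (k : ℤ) : P.map (fun ω => Φ fun z => ε (k + z) ω) = P.map (fun ω => Φ fun z => ε z ω) := by
  have hlaw : ∀ z, P.map (ε z) = P.map (ε 0) := fun z => (hident z).map_eq
  have hshift : P.map (fun ω z => ε (k + z) ω) = P.map (fun ω z => ε z ω) := by
    rw [(hindep.precomp (add_right_injective k)).map_fun_eq_infinitePi_map (fun z => hε _),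
      hindep.map_fun_eq_infinitePi_map hε]
    simp only [hlaw]
  calc P.map (fun ω => Φ fun z => ε (k + z) ω)
      = (P.map fun ω z => ε (k + z) ω).map Φ :=
        (Measure.map_map hΦ (measurable_pi_lambda _ fun z => hε _)).symm
    _ = (P.map fun ω z => ε z ω).map Φ := by rw [hshift]
    _ = P.map (fun ω => Φ fun z => ε z ω) := Measure.map_map hΦ (measurable_pi_lambda _ hε)

end Probability

namespace AugmentedGarch

variable (c g : ℝ → ℝ)

def term (u : ℕ → ℝ) (i : ℕ) : ℝ := g (u i) * ∏ j ∈ range i, c (u j)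

/-- With `u j = ε_{k-1-j}`, `series c g u` is `X_k`. -/
noncomputable def series (u : ℕ → ℝ) : ℝ := ∑' i, term c g u i

variable {c g}

lemma measurable_series (hc : Measurable c) (hg : Measurable g) : Measurable (series c g) :=
  Measurable.tsum fun i => by unfold term; fun_prop

lemma term_succ (u : ℕ → ℝ) (i : ℕ) :
    term c g u (i + 1) = c (u 0) * term c g (fun j => u (j + 1)) i := by
  simp only [term, prod_range_succ']
  ring

lemma series_eq_add_mul {u : ℕ → ℝ} (h : Summable (term c g fun j => u (j + 1))) :
    series c g u = g (u 0) + c (u 0) * series c g (fun j => u (j + 1)) := by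
  have hshift : Summable fun i => term c g u (i + 1) := by
    simpa only [term_succ] using h.mul_left (c (u 0))
  rw [series, tsum_eq_zero_add' hshift]
  simp only [term_succ, tsum_mul_left]
  simp [term, series]

variable {Ω : Type*} [MeasurableSpace Ω] {P : Measure Ω} [IsProbabilityMeasure P]

theorem ae_summable_term (hc : Measurable c) (hg : Measurable g) {ξ : ℕ → Ω → ℝ} {η : Ω → ℝ}
    (hindep : Pairwise fun i j => IndepFun (ξ i) (ξ j) P)
    (hident : ∀ j, IdentDistrib (ξ j) η P P)
    (hlogg : Integrable (fun ω => log⁺ (g (η ω))) P)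
    (hlogc : Integrable (fun ω => log⁺ (c (η ω))) P)
    (hneg : ∫⁻ ω, ENNReal.ofReal (log |c (η ω)|) ∂P
        < ∫⁻ ω, ENNReal.ofReal (-log |c (η ω)|) ∂P) :
    ∀ᵐ ω ∂P, Summable (term c g fun j => ξ j ω) := by
  have hlc : Measurable fun x => log |c x| := by fun_prop
  have hpos : Integrable (fun ω => max (log |c (η ω)|) 0) P := by
    simpa only [log_abs, posLog_apply, max_comm] using hlogc
  obtain ⟨γ, hγ, hprod⟩ := exists_neg_ae_eventually_sum_le_mul
    (Y := fun j ω => log |c (ξ j ω)|) (fun i j hij => (hindep hij).comp hlc hlc)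
    (fun j => (hident j).comp hlc) hpos hneg
  have hgrowth := ae_eventually_le_mul_of_identDistrib
    (Z := fun j ω => log⁺ (g (ξ j ω)))
    (fun j => (hident j).comp (u := fun x => log⁺ (g x)) (by fun_prop)) hlogg
    (fun _ => posLog_nonneg) (by linarith : 0 < -γ / 2)
  filter_upwards [hprod, hgrowth] with ω hcω hgω
  exact summable_mul_prod_of_eventually_log_le hgω hcω (by linarith)

end AugmentedGarch

open AugmentedGarch

/-- **Theorem 1 (Brandt).** If `E log⁺|g(ε₀)| < ∞`, `E log⁺|c(ε₀)| < ∞` and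
`E log|c(ε₀)| < 0` (possibly `= −∞`, expressed by the positive part of the integral being
strictly smaller than the negative part), then for every `k ∈ ℤ` the series
`X_k = ∑_{i≥1} g(ε_{k−i}) ∏_{1≤j<i} c(ε_{k−j})` converges a.s., satisfies the stochastic
recurrence `X_k = c(ε_{k−1}) X_{k−1} + g(ε_{k−1})` a.s., and is strictly stationary. -/
theorem augmented_garch_existence_stationary
    {Ω : Type*} [MeasurableSpace Ω] (P : Measure Ω) [IsProbabilityMeasure P]
    (ε : ℤ → Ω → ℝ) (c g : ℝ → ℝ)
    (hc : Measurable c) (hg : Measurable g)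
    (hεmeas : ∀ k, Measurable (ε k))
    (hindep : iIndepFun ε P)
    (hident : ∀ k, IdentDistrib (ε k) (ε 0) P P)
    (hlogg : Integrable (fun ω => Real.log (max |g (ε 0 ω)| 1)) P)
    (hlogc : Integrable (fun ω => Real.log (max |c (ε 0 ω)| 1)) P)
    (hneg : ∫⁻ ω, ENNReal.ofReal (Real.log |c (ε 0 ω)|) ∂P
        < ∫⁻ ω, ENNReal.ofReal (-(Real.log |c (ε 0 ω)|)) ∂P) :
    ∃ X : ℤ → Ω → ℝ, (∀ k, Measurable (X k)) ∧
      (∀ k : ℤ, ∀ᵐ ω ∂P, Tendsto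
        (fun m => ∑ i ∈ Finset.range m,
          g (ε (k - (i + 1)) ω) * ∏ j ∈ Finset.range i, c (ε (k - (j + 1)) ω))
        atTop (nhds (X k ω))) ∧
      (∀ k : ℤ, ∀ᵐ ω ∂P, X k ω = c (ε (k - 1) ω) * X (k - 1) ω + g (ε (k - 1) ω)) ∧
      (∀ n : ℕ, 1 ≤ n → ∀ k : ℤ,
        Measure.map (fun ω => fun i : Fin n => X (k + 1 + (i : ℕ)) ω) P
          = Measure.map (fun ω => fun i : Fin n => X (1 + (i : ℕ)) ω) P) := by
  have hsummable (k : ℤ) : ∀ᵐ ω ∂P, Summable (term c g fun j : ℕ => ε (k - (j + 1)) ω) :=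
    ae_summable_term hc hg
      (fun i j hij => (hindep.precomp (g := fun j : ℕ => k - (j + 1))
        fun a b h => by simpa using h).indepFun hij)
      (fun j => hident _) (by simpa only [log_max_abs_one] using hlogg)
      (by simpa only [log_max_abs_one] using hlogc) hneg
  refine ⟨fun k ω => series c g fun j : ℕ => ε (k - (j + 1)) ω, fun k => ?_, fun k => ?_,
    fun k => ?_, fun n _ k => ?_⟩
  · exact (measurable_series hc hg).comp (measurable_pi_lambda _ fun j => hεmeas _)
  · filter_upwards [hsummable k] with ω h using h.hasSum.tendsto_sum_nat
  · have hpast (j : ℕ) : k - (((j + 1 : ℕ) : ℤ) + 1) = k - 1 - (j + 1) := by push_cast; ring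
    filter_upwards [hsummable (k - 1)] with ω h
    rw [series_eq_add_mul (by simpa only [hpast] using h)]
    simp only [hpast, Nat.cast_zero, zero_add]
    ring
  · let Φ : (ℤ → ℝ) → Fin n → ℝ := fun v i => series c g fun j : ℕ => v (1 + i - (j + 1))
    have hΦ : Measurable Φ := measurable_pi_lambda _ fun i =>
      (measurable_series hc hg).comp (measurable_pi_lambda _ fun j => measurable_pi_apply _)
    convert map_comp_shift_eq_map hεmeas hindep hident hΦ k using 2 with ω
    ext i
    simp only [Φ, add_assoc, add_sub_assoc]
end

section
/- Let μ > 0 and assume E[|g(ε₀)|^μ] < ∞ and E[|c(ε₀)|^μ] < 1. Then the series X₀ = ∑_{i=1}^∞ g(ε_{−i}) ∏_{1≤j<i} c(ε_{−j}) converges almost surely and E[|X₀|^μ] < ∞. -/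
/-!
The `i`-th term `g(ε_{-i-1}) ∏_{j<i} c(ε_{-j-1})` is a product of independent factors, so its
`μ`-th absolute moment is `E|g(ε₀)|^μ · (E|c(ε₀)|^μ)^i`, a geometric sequence with ratio `< 1`.
For `μ ≤ 1` the subadditivity of `x ↦ x^μ`, and for `μ ≥ 1` Minkowski's inequality in `L^μ`,
turn this into a finite `μ`-th moment of `∑ᵢ |termᵢ|`. Hence the series converges absolutely
almost surely, and its sum is dominated by `∑ᵢ |termᵢ|`.
-/

open MeasureTheory ProbabilityTheory Filter Finset
open scoped ENNReal Topology

theorem ENNReal.rpow_tsum_le_tsum_rpow {ι : Type*} {p : ℝ} (hp₀ : 0 < p) (hp₁ : p ≤ 1)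
    (x : ι → ℝ≥0∞) : (∑' i, x i) ^ p ≤ ∑' i, x i ^ p := by
  have hsum : ∀ s : Finset ι, (∑ i ∈ s, x i) ^ p ≤ ∑ i ∈ s, x i ^ p := fun s =>
    Finset.le_sum_of_subadditive (· ^ p) (by simp [ENNReal.zero_rpow_of_pos hp₀])
      (fun a b => ENNReal.rpow_add_le_add_rpow a b hp₀.le hp₁) s x
  have hiSup : (⨆ s : Finset ι, ∑ i ∈ s, x i) ^ p = ⨆ s : Finset ι, (∑ i ∈ s, x i) ^ p :=
    (ENNReal.orderIsoRpow p hp₀).map_iSup _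
  rw [ENNReal.tsum_eq_iSup_sum, hiSup]
  exact iSup_le fun s => (hsum s).trans (ENNReal.sum_le_tsum s)

section

variable {α : Type*} [MeasurableSpace α] {μ : Measure α}

theorem lintegral_rpow_tsum_le_tsum_lintegral_rpow {ι : Type*} [Countable ι] {p : ℝ}
    (hp₀ : 0 < p) (hp₁ : p ≤ 1) {f : ι → α → ℝ≥0∞} (hf : ∀ i, AEMeasurable (f i) μ) :
    ∫⁻ a, (∑' i, f i a) ^ p ∂μ ≤ ∑' i, ∫⁻ a, f i a ^ p ∂μ := by
  rw [← lintegral_tsum fun i => (hf i).pow_const p]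
  exact lintegral_mono fun a => ENNReal.rpow_tsum_le_tsum_rpow hp₀ hp₁ _

theorem eLpNorm'_tsum_le {q : ℝ} (hq : 1 ≤ q) {f : ℕ → α → ℝ≥0∞}
    (hf : ∀ i, AEMeasurable (f i) μ) :
    eLpNorm' (fun a => ∑' i, f i a) q μ ≤ ∑' i, eLpNorm' (f i) q μ := by
  have hq₀ : 0 ≤ q := zero_le_one.trans hq
  have hpartial : Tendsto (fun n => eLpNorm' (∑ i ∈ range n, f i) q μ) atTop
      (𝓝 (eLpNorm' (fun a => ∑' i, f i a) q μ)) := by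
    simp only [eLpNorm', enorm_eq_self, Finset.sum_apply]
    refine (ENNReal.continuous_rpow_const.tendsto _).comp
      (lintegral_tendsto_of_tendsto_of_monotone (fun n => ?_) ?_ ?_)
    · exact ((range n).aemeasurable_fun_sum fun i _ => hf i).pow_const q
    · exact ae_of_all _ fun a m n hmn =>
        ENNReal.rpow_le_rpow (sum_le_sum_of_subset (range_mono hmn)) hq₀
    · exact ae_of_all _ fun a =>
        (ENNReal.continuous_rpow_const.tendsto _).comp (ENNReal.tendsto_nat_tsum _)
  refine le_of_tendsto' hpartial fun n => ?_
  exact (eLpNorm'_sum_le (fun i _ => (hf i).aestronglyMeasurable) hq).trans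
    (ENNReal.sum_le_tsum _)

theorem lintegral_rpow_tsum_lt_top_of_le_geometric {p : ℝ} (hp : 0 < p) {f : ℕ → α → ℝ≥0∞}
    (hf : ∀ i, AEMeasurable (f i) μ) {B r : ℝ≥0∞} (hB : B ≠ ∞) (hr : r < 1)
    (hmom : ∀ i, ∫⁻ a, f i a ^ p ∂μ ≤ B * r ^ i) :
    ∫⁻ a, (∑' i, f i a) ^ p ∂μ < ∞ := by
  rcases le_total p 1 with hp₁ | hp₁
  · calc ∫⁻ a, (∑' i, f i a) ^ p ∂μ
        ≤ ∑' i, ∫⁻ a, f i a ^ p ∂μ := lintegral_rpow_tsum_le_tsum_lintegral_rpow hp hp₁ hf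
      _ ≤ B * ∑' i, r ^ i := by
        rw [← ENNReal.tsum_mul_left]; exact ENNReal.tsum_le_tsum hmom
      _ < ∞ := ENNReal.mul_lt_top hB.lt_top (tsum_geometric_lt_top.2 hr)
  · have hp' : 0 < 1 / p := by positivity
    have hterm : ∀ i, eLpNorm' (f i) p μ ≤ B ^ (1 / p) * (r ^ (1 / p)) ^ i := fun i =>
      calc eLpNorm' (f i) p μ ≤ (B * r ^ i) ^ (1 / p) := by
            simpa only [eLpNorm', enorm_eq_self] using ENNReal.rpow_le_rpow (hmom i) hp'.le
        _ = B ^ (1 / p) * (r ^ (1 / p)) ^ i := by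
          rw [ENNReal.mul_rpow_of_nonneg _ _ hp'.le, ← ENNReal.rpow_natCast,
            ← ENNReal.rpow_natCast, ← ENNReal.rpow_mul, ← ENNReal.rpow_mul, mul_comm (i : ℝ)]
    have hnorm : eLpNorm' (fun a => ∑' i, f i a) p μ < ∞ :=
      calc eLpNorm' (fun a => ∑' i, f i a) p μ
          ≤ ∑' i, eLpNorm' (f i) p μ := eLpNorm'_tsum_le hp₁ hf
        _ ≤ B ^ (1 / p) * ∑' i, (r ^ (1 / p)) ^ i := by
          rw [← ENNReal.tsum_mul_left]; exact ENNReal.tsum_le_tsum hterm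
        _ < ∞ := ENNReal.mul_lt_top (ENNReal.rpow_lt_top_of_nonneg hp'.le hB)
          (tsum_geometric_lt_top.2 (ENNReal.rpow_lt_one hr hp'))
    simpa only [eLpNorm', enorm_eq_self, ENNReal.rpow_lt_top_iff_of_pos hp'] using hnorm

end

theorem ae_summable_norm_of_lintegral_rpow_tsum_enorm_ne_top {Ω E : Type*} [MeasurableSpace Ω]
    {P : Measure Ω} [SeminormedAddCommGroup E] {T : ℕ → Ω → E}
    (hT : ∀ i, AEStronglyMeasurable (T i) P) {p : ℝ} (hp : 0 < p)
    (h : ∫⁻ ω, (∑' i, ‖T i ω‖ₑ) ^ p ∂P ≠ ∞) :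
    ∀ᵐ ω ∂P, Summable fun i => ‖T i ω‖ := by
  filter_upwards [ae_lt_top' ((AEMeasurable.tsum fun i => (hT i).enorm).pow_const p) h]
    with ω hω
  exact tsum_enorm_ne_top_iff_summable_norm.1 ((ENNReal.rpow_lt_top_iff_of_pos hp).1 hω).ne

theorem lintegral_mul_prod_range_eq_of_iIndepFun {Ω β : Type*} [MeasurableSpace Ω]
    [MeasurableSpace β] {P : Measure Ω} {Y : ℕ → Ω → β} {Z : Ω → β} (hY : ∀ j, Measurable (Y j))
    (hindep : iIndepFun Y P) (hident : ∀ j, IdentDistrib (Y j) Z P P) {G C : β → ℝ≥0∞}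
    (hG : Measurable G) (hC : Measurable C) (i : ℕ) :
    ∫⁻ ω, G (Y i ω) * ∏ j ∈ range i, C (Y j ω) ∂P
      = (∫⁻ ω, G (Z ω) ∂P) * (∫⁻ ω, C (Z ω) ∂P) ^ i := by
  set F : ℕ → β → ℝ≥0∞ := Function.update (fun _ => C) i G
  have hF : ∀ j, Measurable (F j) := fun j => by
    rcases eq_or_ne j i with rfl | hj
    · simpa [F] using hG
    · simpa [F, hj] using hC
  have hF_self : F i = G := Function.update_self _ _ _
  have hF_lt : ∀ j ∈ range i, F j = C := fun j hj =>
    Function.update_of_ne (mem_range.1 hj).ne _ _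
  have hprod : ∀ ω, G (Y i ω) * ∏ j ∈ range i, C (Y j ω) = ∏ j ∈ range (i + 1), F j (Y j ω) :=
    fun ω => by
      rw [prod_range_succ, hF_self, mul_comm]
      exact congrArg (· * _) (prod_congr rfl fun j hj => by rw [hF_lt j hj])
  calc ∫⁻ ω, G (Y i ω) * ∏ j ∈ range i, C (Y j ω) ∂P
      = ∏ j ∈ range (i + 1), ∫⁻ ω, F j (Y j ω) ∂P := by
        simp_rw [hprod]
        exact lintegral_prod_eq_prod_lintegral_of_indepFun _ _ (hindep.comp F hF)
          fun j => (hF j).comp (hY j)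
    _ = ∏ j ∈ range (i + 1), ∫⁻ ω, F j (Z ω) ∂P :=
        prod_congr rfl fun j _ => ((hident j).comp (hF j)).lintegral_eq
    _ = (∫⁻ ω, G (Z ω) ∂P) * (∫⁻ ω, C (Z ω) ∂P) ^ i := by
        rw [prod_range_succ, hF_self, prod_congr rfl fun j hj => by rw [hF_lt j hj],
          prod_const, card_range, mul_comm]

theorem ENNReal.ofReal_abs_rpow_eq_enorm_rpow (x : ℝ) {p : ℝ} (hp : 0 ≤ p) :
    ENNReal.ofReal (|x| ^ p) = ‖x‖ₑ ^ p := by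
  rw [Real.enorm_eq_ofReal_abs, ENNReal.ofReal_rpow_of_nonneg (abs_nonneg x) hp]

theorem augmented_garch_moment_sufficient_general
    {Ω : Type*} [MeasurableSpace Ω] (P : Measure Ω)
    (ε : ℤ → Ω → ℝ) (c g : ℝ → ℝ)
    (hc : Measurable c) (hg : Measurable g)
    (hεmeas : ∀ k, Measurable (ε k))
    (hindep : iIndepFun ε P)
    (hident : ∀ k, IdentDistrib (ε k) (ε 0) P P)
    (μ : ℝ) (hμ : 0 < μ)
    (hgmom : ∫⁻ ω, ENNReal.ofReal (|g (ε 0 ω)| ^ μ) ∂P < ⊤)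
    (hcmom : ∫⁻ ω, ENNReal.ofReal (|c (ε 0 ω)| ^ μ) ∂P < 1) :
    ∃ X₀ : Ω → ℝ, Measurable X₀ ∧
      (∀ᵐ ω ∂P, Tendsto
        (fun m => ∑ i ∈ Finset.range m,
          g (ε (0 - (i + 1) : ℤ) ω) * ∏ j ∈ Finset.range i, c (ε (0 - (j + 1) : ℤ) ω))
        atTop (nhds (X₀ ω))) ∧
      ∫⁻ ω, ENNReal.ofReal (|X₀ ω| ^ μ) ∂P < ⊤ := by
  set Y : ℕ → Ω → ℝ := fun j => ε (0 - (j + 1) : ℤ)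
  have hYindep : iIndepFun Y P := hindep.precomp fun a b hab => by simpa using hab
  set T : ℕ → Ω → ℝ := fun i ω => g (Y i ω) * ∏ j ∈ range i, c (Y j ω)
  have hT : ∀ i, Measurable (T i) := fun i =>
    (hg.comp (hεmeas _)).mul (Finset.measurable_prod _ fun j _ => hc.comp (hεmeas _))
  have hmom : ∀ i, ∫⁻ ω, ‖T i ω‖ₑ ^ μ ∂P
      = (∫⁻ ω, ‖g (ε 0 ω)‖ₑ ^ μ ∂P) * (∫⁻ ω, ‖c (ε 0 ω)‖ₑ ^ μ ∂P) ^ i := fun i => by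
    rw [← lintegral_mul_prod_range_eq_of_iIndepFun (fun j => hεmeas _) hYindep
      (fun j => hident _) (hg.enorm.pow_const μ) (hc.enorm.pow_const μ)]
    congr 1 with ω
    simp only [T, enorm_mul, ENNReal.mul_rpow_of_nonneg _ _ hμ.le]
    simp only [enorm_eq_nnnorm, nnnorm_prod, ENNReal.ofNNReal_finsetProd,
      ENNReal.prod_rpow_of_nonneg hμ.le, Y]
  simp_rw [ENNReal.ofReal_abs_rpow_eq_enorm_rpow _ hμ.le] at hgmom hcmom ⊢
  have hsum_mom : ∫⁻ ω, (∑' i, ‖T i ω‖ₑ) ^ μ ∂P < ∞ :=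
    lintegral_rpow_tsum_lt_top_of_le_geometric hμ (fun i => (hT i).enorm.aemeasurable)
      hgmom.ne hcmom fun i => (hmom i).le
  refine ⟨fun ω => ∑' i, T i ω, Measurable.tsum hT, ?_, ?_⟩
  · filter_upwards [ae_summable_norm_of_lintegral_rpow_tsum_enorm_ne_top
      (fun i => (hT i).aestronglyMeasurable) hμ hsum_mom.ne] with ω hω
    exact hω.of_norm.tendsto_sum_tsum_nat
  · exact (lintegral_mono fun ω => ENNReal.rpow_le_rpow enorm_tsum_le_tsum_enorm hμ.le).trans_lt
      hsum_mom

/-- **Theorem 3, sufficiency.** If `E|g(ε₀)|^μ < ∞` and `E|c(ε₀)|^μ < 1` for some `μ > 0`,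
then the series `X₀ = ∑_{i≥1} g(ε_{−i}) ∏_{1≤j<i} c(ε_{−j})` converges a.s. and
`E|X₀|^μ < ∞`. -/
theorem augmented_garch_moment_sufficient
    {Ω : Type*} [MeasurableSpace Ω] (P : Measure Ω) [IsProbabilityMeasure P]
    (ε : ℤ → Ω → ℝ) (c g : ℝ → ℝ)
    (hc : Measurable c) (hg : Measurable g)
    (hεmeas : ∀ k, Measurable (ε k))
    (hindep : iIndepFun ε P)
    (hident : ∀ k, IdentDistrib (ε k) (ε 0) P P)
    (μ : ℝ) (hμ : 0 < μ)
    (hgmom : ∫⁻ ω, ENNReal.ofReal (|g (ε 0 ω)| ^ μ) ∂P < ⊤)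
    (hcmom : ∫⁻ ω, ENNReal.ofReal (|c (ε 0 ω)| ^ μ) ∂P < 1) :
    ∃ X₀ : Ω → ℝ, Measurable X₀ ∧
      (∀ᵐ ω ∂P, Tendsto
        (fun m => ∑ i ∈ Finset.range m,
          g (ε (0 - (i + 1) : ℤ) ω) * ∏ j ∈ Finset.range i, c (ε (0 - (j + 1) : ℤ) ω))
        atTop (nhds (X₀ ω))) ∧
      ∫⁻ ω, ENNReal.ofReal (|X₀ ω| ^ μ) ∂P < ⊤ :=
  augmented_garch_moment_sufficient_general P ε c g hc hg hεmeas hindep hident μ hμ hgmom hcmom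
end

section
/- Let μ > 0 and assume E[|ε₀|^{2μ}] < ∞. Assume there is a constant c with 0 ≤ c < 1 such that |c(ε₀)| ≤ c almost surely, and assume E[exp(μ|g(ε₀)|)] < ∞. Then the series X₀ converges almost surely and E[|y₀|^{2μ}] < ∞. -/
/-!
Since `|c(ε)| ≤ c₀ < 1`, the `i`-th term of `X₀` is dominated by `c₀ ^ i |g(ε₋ᵢ₋₁)|`, and
`E|g(ε₀)| < ∞` follows from the exponential moment, so the series converges absolutely a.s.
Next, `|y₀|^{2μ} = |ε₀|^{2μ} exp(μ X₀)` is bounded by the limit inferior of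
`|ε₀|^{2μ} ∏_{i<n} exp(μ c₀ ^ i |g(ε₋ᵢ₋₁)|)`. By Fatou and independence its expectation is at
most `E|ε₀|^{2μ} ∏_i E exp(c₀ ^ i μ|g(ε₀)|)`, and convexity of `exp` gives
`E exp(tY) ≤ exp(t E exp Y)` for `t ∈ [0, 1]`, so the product is at most
`exp(E exp(μ|g(ε₀)|) / (1 - c₀))`.
-/

open MeasureTheory ProbabilityTheory Filter Topology Finset

theorem Real.exp_mul_le_one_add_mul_exp {t : ℝ} (x : ℝ) (ht0 : 0 ≤ t) (ht1 : t ≤ 1) :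
    Real.exp (t * x) ≤ 1 + t * Real.exp x := by
  have h := convexOn_exp.2 (Set.mem_univ x) (Set.mem_univ 0) ht0 (sub_nonneg.2 ht1)
    (add_sub_cancel t 1)
  simp only [smul_eq_mul, mul_zero, add_zero, Real.exp_zero, mul_one] at h
  linarith

theorem ENNReal.ofReal_abs_exp_half_mul_rpow (μ x y : ℝ) :
    ENNReal.ofReal (|Real.exp (x / 2) * y| ^ (2 * μ)) =
      ENNReal.ofReal (|y| ^ (2 * μ)) * ENNReal.ofReal (Real.exp (μ * x)) := by
  rw [abs_mul, abs_of_pos (Real.exp_pos _), Real.mul_rpow (Real.exp_pos _).le (abs_nonneg _),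
    ← Real.exp_mul, mul_comm, ENNReal.ofReal_mul (by positivity)]
  ring_nf

section Moments

variable {Ω : Type*} [MeasurableSpace Ω] {P : Measure Ω}

theorem integrable_of_lintegral_exp_mul_abs_ne_top {Y : Ω → ℝ} {μ : ℝ}
    (hY : AEStronglyMeasurable Y P) (hμ : 0 < μ)
    (hexp : ∫⁻ ω, ENNReal.ofReal (Real.exp (μ * |Y ω|)) ∂P ≠ ⊤) :
    Integrable Y P := by
  have hint : Integrable (fun ω => Real.exp (μ * |Y ω|)) P :=
    ⟨(Real.continuous_exp.comp_aestronglyMeasurable (hY.norm.const_mul μ)),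
      (hasFiniteIntegral_iff_ofReal (ae_of_all _ fun _ => (Real.exp_pos _).le)).2 hexp.lt_top⟩
  refine (hint.const_mul μ⁻¹).mono' hY (ae_of_all _ fun ω => ?_)
  rw [Real.norm_eq_abs, le_inv_mul_iff₀ hμ]
  linarith [Real.add_one_le_exp (μ * |Y ω|)]

theorem lintegral_exp_mul_le_exp_mul [IsProbabilityMeasure P] {Y : Ω → ℝ}
    (hexp : ∫⁻ ω, ENNReal.ofReal (Real.exp (Y ω)) ∂P ≠ ⊤)
    {t : ℝ} (ht0 : 0 ≤ t) (ht1 : t ≤ 1) :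
    ∫⁻ ω, ENNReal.ofReal (Real.exp (t * Y ω)) ∂P ≤
      ENNReal.ofReal (Real.exp (t * (∫⁻ ω, ENNReal.ofReal (Real.exp (Y ω)) ∂P).toReal)) := by
  set A := ∫⁻ ω, ENNReal.ofReal (Real.exp (Y ω)) ∂P
  calc ∫⁻ ω, ENNReal.ofReal (Real.exp (t * Y ω)) ∂P
      ≤ ∫⁻ ω, 1 + ENNReal.ofReal t * ENNReal.ofReal (Real.exp (Y ω)) ∂P := by
        refine lintegral_mono fun ω => ?_
        rw [← ENNReal.ofReal_mul ht0, ← ENNReal.ofReal_one, ← ENNReal.ofReal_add zero_le_one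
          (by positivity)]
        exact ENNReal.ofReal_le_ofReal (Real.exp_mul_le_one_add_mul_exp _ ht0 ht1)
    _ = ENNReal.ofReal (1 + t * A.toReal) := by
        rw [lintegral_add_left measurable_const, lintegral_const_mul' _ _ ENNReal.ofReal_ne_top,
          lintegral_const, measure_univ, mul_one, ENNReal.ofReal_add zero_le_one (by positivity),
          ENNReal.ofReal_one, ENNReal.ofReal_mul ht0, ENNReal.ofReal_toReal hexp]
    _ ≤ ENNReal.ofReal (Real.exp (t * A.toReal)) :=
        ENNReal.ofReal_le_ofReal (by linarith [Real.add_one_le_exp (t * A.toReal)])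

theorem ae_summable_norm_of_eLpNorm_one_le_geometric {E : Type*} [NormedAddCommGroup E]
    {f : ℕ → Ω → E} (hf : ∀ i, AEStronglyMeasurable (f i) P) {r C : ENNReal} (hr : r < 1)
    (hC : C ≠ ⊤) (hbound : ∀ i, eLpNorm (f i) 1 P ≤ r ^ i * C) :
    ∀ᵐ ω ∂P, Summable fun i => ‖f i ω‖ := by
  refine summable_norm_of_tsum_eLpNorm_ne_top le_rfl hf (ne_top_of_le_ne_top ?_
    (ENNReal.tsum_le_tsum hbound))
  rw [ENNReal.tsum_mul_right, ENNReal.tsum_geometric]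
  exact ENNReal.mul_ne_top (ENNReal.inv_ne_top.2 (tsub_pos_of_lt hr).ne') hC

end Moments

section Garch

variable {Ω : Type*} {ε : ℤ → Ω → ℝ} {c g : ℝ → ℝ} {c₀ μ : ℝ}

-- Term `i + 1` of the paper's series for `X_k`, re-indexed to start at `i = 0`.
def garchSummand (c g : ℝ → ℝ) (ε : ℤ → Ω → ℝ) (k : ℤ) (i : ℕ) (ω : Ω) : ℝ :=
  g (ε (k - (i + 1)) ω) * ∏ j ∈ range i, c (ε (k - (j + 1)) ω)

theorem ofReal_exp_mul_sum_garchSummand_le (hμ : 0 ≤ μ) {k : ℤ} {ω : Ω}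
    (hdom : ∀ i, |garchSummand c g ε k i ω| ≤ c₀ ^ i * |g (ε (k - (i + 1)) ω)|) (n : ℕ) :
    ENNReal.ofReal (Real.exp (μ * ∑ i ∈ range n, garchSummand c g ε k i ω)) ≤
      ∏ i ∈ range n, ENNReal.ofReal (Real.exp (c₀ ^ i * (μ * |g (ε (k - (i + 1)) ω)|))) := by
  rw [← ENNReal.ofReal_prod_of_nonneg fun _ _ => (Real.exp_pos _).le, ← Real.exp_sum, mul_sum]
  refine ENNReal.ofReal_le_ofReal (Real.exp_le_exp.2 (sum_le_sum fun i _ => ?_))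
  calc μ * garchSummand c g ε k i ω ≤ μ * (c₀ ^ i * |g (ε (k - (i + 1)) ω)|) :=
        mul_le_mul_of_nonneg_left ((le_abs_self _).trans (hdom i)) hμ
    _ = c₀ ^ i * (μ * |g (ε (k - (i + 1)) ω)|) := mul_left_comm _ _ _

variable [MeasurableSpace Ω] {P : Measure Ω}

theorem lintegral_comp_mul_prod_comp_past_eq (hindep : iIndepFun ε P)
    (hεmeas : ∀ k, Measurable (ε k)) {F : ℝ → ENNReal} {G : ℕ → ℝ → ENNReal}
    (hF : Measurable F) (hG : ∀ i, Measurable (G i)) (k : ℤ) (n : ℕ) :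
    ∫⁻ ω, F (ε k ω) * ∏ i ∈ range n, G i (ε (k - (i + 1)) ω) ∂P =
      (∫⁻ ω, F (ε k ω) ∂P) * ∏ i ∈ range n, ∫⁻ ω, G i (ε (k - (i + 1)) ω) ∂P := by
  let W : ℕ → ℝ → ENNReal := fun j => match j with
    | 0 => F
    | i + 1 => G i
  have hW : ∀ j, Measurable (W j) := fun j => by cases j <;> simp only [W, hF, hG]
  have hpast : iIndepFun (fun j : ℕ => ε (k - j)) P :=
    hindep.precomp fun a b h => by simpa using h
  have key := lintegral_prod_eq_prod_lintegral_of_indepFun (range (n + 1))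
    (fun j ω => W j (ε (k - j) ω)) (hpast.comp W hW) fun j => (hW j).comp (hεmeas _)
  simp only [prod_range_succ', W, Nat.cast_add, Nat.cast_one, Nat.cast_zero, sub_zero] at key
  simpa only [mul_comm] using key

theorem measurable_garchSummand (hc : Measurable c) (hg : Measurable g)
    (hεmeas : ∀ k, Measurable (ε k)) (k : ℤ) (i : ℕ) : Measurable (garchSummand c g ε k i) :=
  (hg.comp (hεmeas _)).mul (Finset.measurable_prod _ fun _ _ => hc.comp (hεmeas _))

theorem ae_abs_garchSummand_le (hcb : ∀ k, ∀ᵐ ω ∂P, |c (ε k ω)| ≤ c₀) (k : ℤ) :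
    ∀ᵐ ω ∂P, ∀ i, |garchSummand c g ε k i ω| ≤ c₀ ^ i * |g (ε (k - (i + 1)) ω)| := by
  filter_upwards [ae_all_iff.2 fun j : ℕ => hcb (k - (j + 1))] with ω hω i
  have hprod : |∏ j ∈ range i, c (ε (k - (j + 1)) ω)| ≤ c₀ ^ i := by
    rw [Finset.abs_prod]
    exact (prod_le_prod (fun _ _ => abs_nonneg _) fun j _ => hω j).trans_eq (by simp)
  rw [garchSummand, abs_mul, mul_comm]
  exact mul_le_mul_of_nonneg_right hprod (abs_nonneg _)

theorem ae_summable_norm_garchSummand (hc : Measurable c) (hg : Measurable g)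
    (hεmeas : ∀ k, Measurable (ε k)) (hident : ∀ k, IdentDistrib (ε k) (ε 0) P P)
    (hcb : ∀ k, ∀ᵐ ω ∂P, |c (ε k ω)| ≤ c₀) (hc₀0 : 0 ≤ c₀) (hc₀1 : c₀ < 1)
    (hgint : Integrable (fun ω => g (ε 0 ω)) P) (k : ℤ) :
    ∀ᵐ ω ∂P, Summable fun i => ‖garchSummand c g ε k i ω‖ := by
  refine ae_summable_norm_of_eLpNorm_one_le_geometric
    (fun i => (measurable_garchSummand hc hg hεmeas k i).aestronglyMeasurable)
    (r := ‖c₀‖ₑ) (by simpa [Real.enorm_eq_ofReal hc₀0] using hc₀1)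
    (memLp_one_iff_integrable.2 hgint).eLpNorm_lt_top.ne fun i => ?_
  have hdom : ∀ᵐ ω ∂P, ‖garchSummand c g ε k i ω‖ ≤ ‖c₀ ^ i * g (ε (k - (i + 1)) ω)‖ := by
    filter_upwards [ae_abs_garchSummand_le hcb k] with ω hω
    simpa [abs_mul, abs_of_nonneg hc₀0] using hω i
  calc eLpNorm (garchSummand c g ε k i) 1 P
      ≤ eLpNorm (fun ω => c₀ ^ i * g (ε (k - (i + 1)) ω)) 1 P := eLpNorm_mono_ae hdom
    _ = eLpNorm (c₀ ^ i • (g ∘ ε (k - (i + 1)))) 1 P := rfl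
    _ = ‖c₀‖ₑ ^ i * eLpNorm (g ∘ ε 0) 1 P := by
        rw [eLpNorm_const_smul, enorm_pow, ((hident _).comp hg).eLpNorm_eq]

theorem prod_lintegral_exp_garch_le [IsProbabilityMeasure P] (hg : Measurable g)
    (hident : ∀ k, IdentDistrib (ε k) (ε 0) P P) (hc₀0 : 0 ≤ c₀) (hc₀1 : c₀ < 1)
    (hgmom : ∫⁻ ω, ENNReal.ofReal (Real.exp (μ * |g (ε 0 ω)|)) ∂P ≠ ⊤) (k : ℤ) (n : ℕ) :
    ∏ i ∈ range n, ∫⁻ ω, ENNReal.ofReal (Real.exp (c₀ ^ i * (μ * |g (ε (k - (i + 1)) ω)|))) ∂P ≤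
      ENNReal.ofReal (Real.exp
        ((∫⁻ ω, ENNReal.ofReal (Real.exp (μ * |g (ε 0 ω)|)) ∂P).toReal / (1 - c₀))) := by
  set a := (∫⁻ ω, ENNReal.ofReal (Real.exp (μ * |g (ε 0 ω)|)) ∂P).toReal
  have ha : 0 ≤ a := ENNReal.toReal_nonneg
  calc ∏ i ∈ range n,
        ∫⁻ ω, ENNReal.ofReal (Real.exp (c₀ ^ i * (μ * |g (ε (k - (i + 1)) ω)|))) ∂P
      ≤ ∏ i ∈ range n, ENNReal.ofReal (Real.exp (c₀ ^ i * a)) := by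
        refine prod_le_prod' fun i _ => ?_
        refine ((hident _).comp (by fun_prop : Measurable fun x =>
          ENNReal.ofReal (Real.exp (c₀ ^ i * (μ * |g x|))))).lintegral_eq.trans_le ?_
        exact lintegral_exp_mul_le_exp_mul hgmom (pow_nonneg hc₀0 i) (pow_le_one₀ hc₀0 hc₀1.le)
    _ = ENNReal.ofReal (Real.exp ((∑ i ∈ range n, c₀ ^ i) * a)) := by
        rw [sum_mul, Real.exp_sum, ENNReal.ofReal_prod_of_nonneg fun _ _ => (Real.exp_pos _).le]
    _ ≤ ENNReal.ofReal (Real.exp (a / (1 - c₀))) := by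
        refine ENNReal.ofReal_le_ofReal (Real.exp_le_exp.2 ?_)
        rw [div_eq_mul_inv, mul_comm a, range_eq_Ico, ← one_div, ← pow_zero c₀]
        exact mul_le_mul_of_nonneg_right (geom_sum_Ico_le_of_lt_one hc₀0 hc₀1) ha

theorem lintegral_exp_mul_le_of_tendsto_sum_garchSummand [IsProbabilityMeasure P]
    (hindep : iIndepFun ε P) (hεmeas : ∀ k, Measurable (ε k))
    (hident : ∀ k, IdentDistrib (ε k) (ε 0) P P) (hg : Measurable g)
    (hcb : ∀ k, ∀ᵐ ω ∂P, |c (ε k ω)| ≤ c₀) (hc₀0 : 0 ≤ c₀) (hc₀1 : c₀ < 1) (hμ : 0 ≤ μ)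
    (hgmom : ∫⁻ ω, ENNReal.ofReal (Real.exp (μ * |g (ε 0 ω)|)) ∂P ≠ ⊤)
    {F : ℝ → ENNReal} (hF : Measurable F) {k : ℤ} {X : Ω → ℝ}
    (hX : ∀ᵐ ω ∂P, Tendsto (fun n => ∑ i ∈ range n, garchSummand c g ε k i ω) atTop (𝓝 (X ω))) :
    ∫⁻ ω, F (ε k ω) * ENNReal.ofReal (Real.exp (μ * X ω)) ∂P ≤
      (∫⁻ ω, F (ε 0 ω) ∂P) * ENNReal.ofReal (Real.exp
        ((∫⁻ ω, ENNReal.ofReal (Real.exp (μ * |g (ε 0 ω)|)) ∂P).toReal / (1 - c₀))) := by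
  set D : ℕ → Ω → ENNReal := fun n ω =>
    F (ε k ω) * ∏ i ∈ range n, ENNReal.ofReal (Real.exp (c₀ ^ i * (μ * |g (ε (k - (i + 1)) ω)|)))
  have hD : ∀ n, Measurable (D n) := fun n => by fun_prop
  have hpointwise : ∀ᵐ ω ∂P,
      F (ε k ω) * ENNReal.ofReal (Real.exp (μ * X ω)) ≤ liminf (fun n => D n ω) atTop := by
    filter_upwards [hX, ae_abs_garchSummand_le hcb k] with ω hlim hdom
    have htend := ENNReal.Tendsto.const_mul ((ENNReal.continuous_ofReal.tendsto _).comp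
      ((Real.continuous_exp.tendsto _).comp (hlim.const_mul μ)))
      (Or.inl (ENNReal.ofReal_pos.2 (Real.exp_pos (μ * X ω))).ne') (a := F (ε k ω))
    rw [← htend.liminf_eq]
    exact liminf_le_liminf (Eventually.of_forall fun n =>
      mul_le_mul_right (ofReal_exp_mul_sum_garchSummand_le hμ hdom n) _)
  calc ∫⁻ ω, F (ε k ω) * ENNReal.ofReal (Real.exp (μ * X ω)) ∂P
      ≤ ∫⁻ ω, liminf (fun n => D n ω) atTop ∂P := lintegral_mono_ae hpointwise
    _ ≤ liminf (fun n => ∫⁻ ω, D n ω ∂P) atTop := lintegral_liminf_le hD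
    _ ≤ _ := by
        refine liminf_le_of_frequently_le' (Frequently.of_forall fun n => ?_)
        dsimp only [D]
        rw [lintegral_comp_mul_prod_comp_past_eq hindep hεmeas hF
            (G := fun i x => ENNReal.ofReal (Real.exp (c₀ ^ i * (μ * |g x|)))) (by fun_prop)]
        exact mul_le_mul' ((hident k).comp hF).lintegral_eq.le
          (prod_lintegral_exp_garch_le hg hident hc₀0 hc₀1 hgmom k n)

end Garch

/-- **Proposition 1, sufficiency.** For an exponential augmented GARCH process
(`Λ(x) = log x`, so `σ₀² = exp X₀` and `y₀ = exp(X₀/2) ε₀`): if `|c(ε₀)| ≤ c < 1` a.s.,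
`E exp(μ|g(ε₀)|) < ∞` and `E|ε₀|^{2μ} < ∞`, then the series `X₀` converges a.s. and
`E|y₀|^{2μ} < ∞`. -/
theorem exponential_garch_moment_sufficient
    {Ω : Type*} [MeasurableSpace Ω] (P : Measure Ω) [IsProbabilityMeasure P]
    (ε : ℤ → Ω → ℝ) (c g : ℝ → ℝ)
    (hc : Measurable c) (hg : Measurable g)
    (hεmeas : ∀ k, Measurable (ε k))
    (hindep : iIndepFun ε P)
    (hident : ∀ k, IdentDistrib (ε k) (ε 0) P P)
    (μ : ℝ) (hμ : 0 < μ)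
    (hεmom : ∫⁻ ω, ENNReal.ofReal (|ε 0 ω| ^ (2 * μ)) ∂P < ⊤)
    (c₀ : ℝ) (hc₀0 : 0 ≤ c₀) (hc₀1 : c₀ < 1)
    (hcbd : ∀ᵐ ω ∂P, |c (ε 0 ω)| ≤ c₀)
    (hgmom : ∫⁻ ω, ENNReal.ofReal (Real.exp (μ * |g (ε 0 ω)|)) ∂P < ⊤) :
    ∃ X₀ : Ω → ℝ, Measurable X₀ ∧
      (∀ᵐ ω ∂P, Tendsto
        (fun m => ∑ i ∈ Finset.range m,
          g (ε (0 - (i + 1) : ℤ) ω) * ∏ j ∈ Finset.range i, c (ε (0 - (j + 1) : ℤ) ω))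
        atTop (nhds (X₀ ω))) ∧
      ∫⁻ ω, ENNReal.ofReal (|Real.exp (X₀ ω / 2) * ε 0 ω| ^ (2 * μ)) ∂P < ⊤ := by
  have hcb : ∀ k, ∀ᵐ ω ∂P, |c (ε k ω)| ≤ c₀ := fun k =>
    (hident k).symm.ae_snd (measurableSet_le hc.abs measurable_const) hcbd
  have hgint : Integrable (fun ω => g (ε 0 ω)) P := integrable_of_lintegral_exp_mul_abs_ne_top
    (hg.comp (hεmeas 0)).aestronglyMeasurable hμ hgmom.ne
  have hconv : ∀ᵐ ω ∂P, ∃ x,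
      Tendsto (fun m => ∑ i ∈ range m, garchSummand c g ε 0 i ω) atTop (𝓝 x) := by
    filter_upwards [ae_summable_norm_garchSummand hc hg hεmeas hident hcb hc₀0 hc₀1 hgint 0]
      with ω hω
    exact ⟨_, hω.of_norm.hasSum.tendsto_sum_nat⟩
  obtain ⟨X₀, hX₀meas, hX₀⟩ := measurable_limit_of_tendsto_metrizable_ae (fun m =>
    (measurable_sum _ fun i _ => measurable_garchSummand hc hg hεmeas 0 i).aemeasurable) hconv
  refine ⟨X₀, hX₀meas, hX₀, ?_⟩
  simp_rw [ENNReal.ofReal_abs_exp_half_mul_rpow]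
  refine (lintegral_exp_mul_le_of_tendsto_sum_garchSummand hindep hεmeas hident hg hcb hc₀0 hc₀1
    hμ.le hgmom.ne (F := fun x => ENNReal.ofReal (|x| ^ (2 * μ))) (by fun_prop) hX₀).trans_lt ?_
  exact ENNReal.mul_lt_top hεmom ENNReal.ofReal_lt_top
end

section
/- Assume c(ε₀) ≥ 0 and g(ε₀) ≥ 0 almost surely, the series X₀ converges almost surely, and E[η₀²] < ∞. Then there exist constants C₁ > 0 and 0 < ϱ < 1 such that for all k ∈ ℤ and all m ≥ 1, (E[(η_k − η_{k,m})²])^{1/2} ≤ C₁ ϱ^m. -/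
/-!
Write `α = ν / (2δ)`. Since `f` is positively homogeneous of degree `ν`,
`η_k - η_{k,m} = (X_k^α - X_{k,m}^α) f(ε_k)`, and `u^α - v^α ≤ max(α,1) (u - v)^β u^(α-β)` with
`β = min(α,1)`. Hölder's inequality with exponent `κ = β/α` then bounds `E[(η_k - η_{k,m})²]` by
`C A_m^κ A_0^(1-κ)`, where `A_m = E[(X_k - X_{k,m})^(2α) |ε_k|^(2ν)]`. The remainder
`X_k - X_{k,m} = c(ε_{k-1}) ⋯ c(ε_{k-m}) X_{k-m}` is a product of independent factors, so by
stationarity `A_m = ρ^m E[η_0²]` with `ρ = E[c(ε_0)^(2α)]`. Finally `A_m → 0` by dominated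
convergence, which forces `ρ < 1` unless `E[η_0²] = 0`.
-/

open MeasureTheory ProbabilityTheory Filter Finset
open scoped ENNReal Topology

namespace AugmentedGARCH

section RpowInequalities

variable {α u v : ℝ}

theorem rpow_sub_rpow_le_rpow_sub (hα₀ : 0 ≤ α) (hα₁ : α ≤ 1) (hv : 0 ≤ v) (hvu : v ≤ u) :
    u ^ α - v ^ α ≤ (u - v) ^ α := by
  have := Real.rpow_add_le_add_rpow (sub_nonneg.2 hvu) hv hα₀ hα₁
  rw [sub_add_cancel] at this
  linarith

theorem rpow_sub_rpow_le_mul_rpow (hα : 1 ≤ α) (hv : 0 ≤ v) (hvu : v ≤ u) :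
    u ^ α - v ^ α ≤ α * (u - v) * u ^ (α - 1) := by
  rcases (hv.trans hvu).eq_or_lt with rfl | hu
  · obtain rfl : v = 0 := le_antisymm hvu hv
    simp
  -- Bernoulli's inequality for `(v / u) ^ α = (1 + (v / u - 1)) ^ α`
  have hbern := one_add_mul_self_le_rpow_one_add
    (by linarith [div_nonneg hv hu.le] : -1 ≤ v / u - 1) hα
  rw [add_sub_cancel, Real.div_rpow hv hu.le] at hbern
  have hupow : u ^ α = u ^ (α - 1) * u := by
    rw [← Real.rpow_add_one hu.ne', sub_add_cancel]
  have key : u ^ α * (1 + α * (v / u - 1)) ≤ v ^ α := by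
    rwa [le_div_iff₀ (Real.rpow_pos_of_pos hu α), mul_comm] at hbern
  have expand : u ^ α * (1 + α * (v / u - 1)) = u ^ α - α * (u - v) * u ^ (α - 1) := by
    rw [hupow]; field_simp; ring
  linarith

theorem rpow_sub_rpow_le_max_mul (hα : 0 < α) (hv : 0 ≤ v) (hvu : v ≤ u) :
    u ^ α - v ^ α ≤ max α 1 * (u - v) ^ min α 1 * u ^ (α - min α 1) := by
  rcases le_total α 1 with hα₁ | hα₁
  · rw [max_eq_right hα₁, min_eq_left hα₁, sub_self, Real.rpow_zero, one_mul, mul_one]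
    exact rpow_sub_rpow_le_rpow_sub hα.le hα₁ hv hvu
  · rw [max_eq_left hα₁, min_eq_right hα₁, Real.rpow_one]
    exact rpow_sub_rpow_le_mul_rpow hα₁ hv hvu

-- Shaped for Hölder's inequality with the conjugate exponents `1 / κ` and `1 / (1 - κ)`,
-- where `κ = min α 1 / α`.
theorem sq_rpow_sub_rpow_mul_le (hα : 0 < α) (hv : 0 ≤ v) (hvu : v ≤ u) {E : ℝ} (hE : 0 ≤ E) :
    (u ^ α - v ^ α) ^ 2 * E ≤ max α 1 ^ 2 *
      (((u - v) ^ (2 * α) * E) ^ (min α 1 / α) * (u ^ (2 * α) * E) ^ (1 - min α 1 / α)) := by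
  set β := min α 1
  have hu : 0 ≤ u := hv.trans hvu
  have huv : 0 ≤ u - v := sub_nonneg.2 hvu
  have hκ₀ : 0 ≤ β / α := div_nonneg (le_min hα.le zero_le_one) hα.le
  have hκ₁ : 0 ≤ 1 - β / α := sub_nonneg.2 ((div_le_one hα).2 (min_le_left _ _))
  have hrhs : ((u - v) ^ (2 * α) * E) ^ (β / α) * (u ^ (2 * α) * E) ^ (1 - β / α)
      = ((u - v) ^ β * u ^ (α - β)) ^ 2 * E := by
    rw [Real.mul_rpow (by positivity) hE, Real.mul_rpow (by positivity) hE,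
      ← Real.rpow_mul huv, ← Real.rpow_mul hu, mul_mul_mul_comm,
      ← Real.rpow_add_of_nonneg hE hκ₀ hκ₁, add_sub_cancel, Real.rpow_one, mul_pow,
      ← Real.rpow_mul_natCast huv, ← Real.rpow_mul_natCast hu]
    congr 3 <;> field_simp <;> ring
  rw [hrhs, ← mul_assoc, ← mul_pow, ← mul_assoc]
  gcongr
  · exact sub_nonneg.2 (Real.rpow_le_rpow hv hvu hα.le)
  · exact rpow_sub_rpow_le_max_mul hα hv hvu

end RpowInequalities

section PowerTransform

def IsPowerTransform (ν : ℝ) (f : ℝ → ℝ) : Prop :=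
  (∀ x, f x = |x| ^ ν) ∨ (∀ x, f x = Real.sign x * |x| ^ ν)

variable {f : ℝ → ℝ} {ν : ℝ}

theorem IsPowerTransform.apply_mul (hf : IsPowerTransform ν f) (hν : ν ≠ 0) {a : ℝ} (ha : 0 ≤ a)
    (x : ℝ) : f (a * x) = a ^ ν * f x := by
  rcases ha.eq_or_lt with rfl | ha
  · rcases hf with hf | hf <;> simp [hf, Real.zero_rpow hν]
  have habs : |a * x| ^ ν = a ^ ν * |x| ^ ν := by
    rw [abs_mul, abs_of_pos ha, Real.mul_rpow ha.le (abs_nonneg x)]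
  have hsign : Real.sign (a * x) = Real.sign x := by
    rcases lt_trichotomy x 0 with hx | rfl | hx
    · rw [Real.sign_of_neg hx, Real.sign_of_neg (mul_neg_of_pos_of_neg ha hx)]
    · simp
    · rw [Real.sign_of_pos hx, Real.sign_of_pos (mul_pos ha hx)]
  rcases hf with hf | hf
  · rw [hf, hf, habs]
  · rw [hf, hf, habs, hsign]; ring

theorem IsPowerTransform.apply_rpow_mul (hf : IsPowerTransform ν f) (hν : ν ≠ 0) {u : ℝ}
    (hu : 0 ≤ u) (γ x : ℝ) : f (u ^ γ * x) = u ^ (γ * ν) * f x := by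
  rw [hf.apply_mul hν (Real.rpow_nonneg hu γ), ← Real.rpow_mul hu]

theorem IsPowerTransform.sq_apply (hf : IsPowerTransform ν f) (hν : ν ≠ 0) (x : ℝ) :
    f x ^ 2 = |x| ^ (2 * ν) := by
  have hsq : (|x| ^ ν) ^ 2 = |x| ^ (2 * ν) := by
    rw [← Real.rpow_natCast, ← Real.rpow_mul (abs_nonneg x), mul_comm]; norm_num
  rcases hf with hf | hf
  · rw [hf, hsq]
  · rcases eq_or_ne x 0 with rfl | hx
    · simp [hf, Real.zero_rpow hν, Real.zero_rpow (mul_ne_zero two_ne_zero hν)]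
    · rcases Real.sign_apply_eq_of_ne_zero x hx with h | h <;> rw [hf, h, ← hsq] <;> ring

end PowerTransform

section Series

variable {c g : ℝ → ℝ} {w : ℕ → ℝ}

theorem iSup_ofReal_eq_of_tendsto {a : ℕ → ℝ} {x : ℝ} (ha : Monotone a)
    (h : Tendsto a atTop (𝓝 x)) : ⨆ n, ENNReal.ofReal (a n) = ENNReal.ofReal x :=
  tendsto_nhds_unique (tendsto_atTop_iSup fun _ _ hmn => ENNReal.ofReal_le_ofReal (ha hmn))
    ((ENNReal.continuous_ofReal.tendsto x).comp h)

/-- At `w = past ε k ω` this is the truncated series `X_{k,n}`. -/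
def partialSum (c g : ℝ → ℝ) (w : ℕ → ℝ) (n : ℕ) : ℝ :=
  ∑ i ∈ range n, g (w i) * ∏ j ∈ range i, c (w j)

/-- The sum of the series in `[0, ∞]` when its terms are nonnegative; as a supremum it is
measurable without any convergence assumption. -/
noncomputable def seriesSum (c g : ℝ → ℝ) (w : ℕ → ℝ) : ℝ≥0∞ :=
  ⨆ n, ENNReal.ofReal (partialSum c g w n)

@[simp]
theorem partialSum_zero : partialSum c g w 0 = 0 := by
  simp [partialSum]

theorem partialSum_add (m n : ℕ) :
    partialSum c g w (m + n) =
      partialSum c g w m + (∏ j ∈ range m, c (w j)) * partialSum c g (fun i => w (m + i)) n := by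
  simp only [partialSum, sum_range_add, mul_sum, prod_range_add]
  congr 1
  exact sum_congr rfl fun i _ => by ring

theorem partialSum_nonneg (hc : ∀ i, 0 ≤ c (w i)) (hg : ∀ i, 0 ≤ g (w i)) (n : ℕ) :
    0 ≤ partialSum c g w n :=
  sum_nonneg fun i _ => mul_nonneg (hg i) (prod_nonneg fun j _ => hc j)

theorem monotone_partialSum (hc : ∀ i, 0 ≤ c (w i)) (hg : ∀ i, 0 ≤ g (w i)) :
    Monotone (partialSum c g w) :=
  monotone_nat_of_le_succ fun n => by
    rw [partialSum_add n 1]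
    exact le_add_of_nonneg_right (mul_nonneg (prod_nonneg fun j _ => hc j)
      (partialSum_nonneg (fun i => hc _) (fun i => hg _) 1))

theorem partialSum_le_of_tendsto (hc : ∀ i, 0 ≤ c (w i)) (hg : ∀ i, 0 ≤ g (w i)) {x : ℝ}
    (hx : Tendsto (partialSum c g w) atTop (𝓝 x)) (n : ℕ) : partialSum c g w n ≤ x :=
  (monotone_partialSum hc hg).ge_of_tendsto hx n

theorem seriesSum_eq_ofReal (hc : ∀ i, 0 ≤ c (w i)) (hg : ∀ i, 0 ≤ g (w i)) {x : ℝ}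
    (hx : Tendsto (partialSum c g w) atTop (𝓝 x)) : seriesSum c g w = ENNReal.ofReal x :=
  iSup_ofReal_eq_of_tendsto (monotone_partialSum hc hg) hx

theorem ofReal_sub_partialSum (hc : ∀ i, 0 ≤ c (w i)) (hg : ∀ i, 0 ≤ g (w i)) {x : ℝ}
    (hx : Tendsto (partialSum c g w) atTop (𝓝 x)) (m : ℕ) :
    ENNReal.ofReal (x - partialSum c g w m) =
      ENNReal.ofReal (∏ j ∈ range m, c (w j)) * seriesSum c g (fun i => w (m + i)) := by
  have hmono : Monotone fun n => partialSum c g w (m + n) - partialSum c g w m :=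
    fun n n' h => sub_le_sub_right (monotone_partialSum hc hg (by omega)) _
  have htend : Tendsto (fun n => partialSum c g w (m + n) - partialSum c g w m) atTop
      (𝓝 (x - partialSum c g w m)) :=
    (hx.comp (tendsto_add_atTop_nat m |>.congr fun n => add_comm n m)).sub_const _
  rw [← iSup_ofReal_eq_of_tendsto hmono htend, seriesSum, ENNReal.mul_iSup]
  refine iSup_congr fun n => ?_
  rw [partialSum_add, add_sub_cancel_left,
    ENNReal.ofReal_mul (prod_nonneg fun j _ => hc j)]

theorem measurable_partialSum (hc : Measurable c) (hg : Measurable g) (n : ℕ) :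
    Measurable fun w => partialSum c g w n :=
  measurable_sum _ fun i _ => (hg.comp (measurable_pi_apply i)).mul
    (measurable_prod _ fun j _ => hc.comp (measurable_pi_apply j))

theorem measurable_seriesSum (hc : Measurable c) (hg : Measurable g) :
    Measurable (seriesSum c g) :=
  .iSup fun n => (measurable_partialSum hc hg n).ennreal_ofReal

end Series

section IIDSequence

variable {Ω : Type*} {ε : ℤ → Ω → ℝ}

/-- The innovations strictly before time `k`, most recent first: `(ε_{k-1}, ε_{k-2}, …)`. -/
def past (ε : ℤ → Ω → ℝ) (k : ℤ) (ω : Ω) : ℕ → ℝ := fun i => ε (k - (i + 1)) ω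

theorem past_zero (k : ℤ) (ω : Ω) : past ε k ω 0 = ε (k - 1) ω := by
  simp [past]

theorem past_succ (k : ℤ) (ω : Ω) (i : ℕ) : past ε k ω (i + 1) = past ε (k - 1) ω i := by
  simp only [past]; push_cast; ring_nf

variable [MeasurableSpace Ω] {P : Measure Ω}

theorem ae_forall_of_identDistrib (hident : ∀ k, IdentDistrib (ε k) (ε 0) P P) {p : ℝ → Prop}
    (hp : MeasurableSet {x | p x}) (h₀ : ∀ᵐ ω ∂P, p (ε 0 ω)) : ∀ᵐ ω ∂P, ∀ i, p (ε i ω) :=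
  ae_all_iff.2 fun i => (hident i).symm.ae_snd hp h₀

theorem measurable_past (hεmeas : ∀ k, Measurable (ε k)) (k : ℤ) : Measurable (past ε k) :=
  measurable_pi_lambda _ fun _ => hεmeas _

theorem indepFun_past (hεmeas : ∀ k, Measurable (ε k)) (hindep : iIndepFun ε P) (k : ℤ) :
    IndepFun (ε k) (past ε k) P := by
  have h := indep_iSup_of_disjoint (fun i => (hεmeas i).comap_le) hindep.iIndep
    (S := {k}) (T := Set.Iio k) (by simp)
  rw [IndepFun_iff_Indep]
  refine indep_of_indep_of_le_left (indep_of_indep_of_le_right h ?_) ?_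
  · refine measurable_iff_comap_le.1 (@measurable_pi_lambda _ _ _
      (⨆ j ∈ Set.Iio k, MeasurableSpace.comap (ε j) inferInstance) _ _ fun i => ?_)
    exact measurable_iff_comap_le.2 (le_iSup₂ (f := fun j (_ : j ∈ Set.Iio k) =>
      MeasurableSpace.comap (ε j) inferInstance) (k - (i + 1)) (by simp))
  · exact le_iSup₂ (f := fun j (_ : j ∈ ({k} : Set ℤ)) =>
      MeasurableSpace.comap (ε j) inferInstance) k rfl

theorem identDistrib_past (hindep : iIndepFun ε P)
    (hident : ∀ k, IdentDistrib (ε k) (ε 0) P P) (k : ℤ) :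
    IdentDistrib (past ε k) (past ε 0) P P := by
  have hinj (k : ℤ) : Function.Injective fun i : ℕ => k - (i + 1) := fun i j h => by
    simpa using h
  exact IdentDistrib.pi (fun i => (hident _).trans (hident _).symm)
    (hindep.precomp (hinj k)) (hindep.precomp (hinj 0))

theorem lintegral_mul_past (hεmeas : ∀ k, Measurable (ε k)) (hindep : iIndepFun ε P)
    (hident : ∀ k, IdentDistrib (ε k) (ε 0) P P) {φ : ℝ → ℝ≥0∞} {Φ : (ℕ → ℝ) → ℝ≥0∞}
    (hφ : Measurable φ) (hΦ : Measurable Φ) (k : ℤ) :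
    ∫⁻ ω, φ (ε k ω) * Φ (past ε k ω) ∂P = (∫⁻ ω, φ (ε 0 ω) ∂P) * ∫⁻ ω, Φ (past ε 0 ω) ∂P := by
  rw [lintegral_mul_eq_lintegral_mul_lintegral_of_indepFun''
      (f := fun ω => φ (ε k ω)) (g := fun ω => Φ (past ε k ω))
      (hφ.comp (hεmeas k)).aemeasurable (hΦ.comp (measurable_past hεmeas k)).aemeasurable
      ((indepFun_past hεmeas hindep k).comp hφ hΦ)]
  exact congr_arg₂ (· * ·) ((hident k).comp hφ).lintegral_eq
    ((identDistrib_past hindep hident k).comp hΦ).lintegral_eq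

theorem lintegral_prod_mul_past (hεmeas : ∀ k, Measurable (ε k)) (hindep : iIndepFun ε P)
    (hident : ∀ k, IdentDistrib (ε k) (ε 0) P P) {φ : ℝ → ℝ≥0∞} {Φ : (ℕ → ℝ) → ℝ≥0∞}
    (hφ : Measurable φ) (hΦ : Measurable Φ) (m : ℕ) (k : ℤ) :
    ∫⁻ ω, (∏ j ∈ range m, φ (past ε k ω j)) * Φ (fun i => past ε k ω (m + i)) ∂P =
      (∫⁻ ω, φ (ε 0 ω) ∂P) ^ m * ∫⁻ ω, Φ (past ε 0 ω) ∂P := by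
  induction m generalizing k with
  | zero =>
    simpa using ((identDistrib_past hindep hident k).comp hΦ).lintegral_eq
  | succ m ih =>
    have hΨ : Measurable fun w : ℕ → ℝ => (∏ j ∈ range m, φ (w j)) * Φ (fun i => w (m + i)) :=
      (measurable_prod _ fun j _ => hφ.comp (measurable_pi_apply j)).mul
        (hΦ.comp (measurable_pi_lambda _ fun i => measurable_pi_apply _))
    have hsplit : ∀ ω, (∏ j ∈ range (m + 1), φ (past ε k ω j)) *
        Φ (fun i => past ε k ω (m + 1 + i)) = φ (ε (k - 1) ω) *
          ((∏ j ∈ range m, φ (past ε (k - 1) ω j)) * Φ (fun i => past ε (k - 1) ω (m + i))) := by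
      intro ω
      simp only [prod_range_succ', past_succ, past_zero, Nat.add_right_comm m 1]
      ring
    rw [lintegral_congr hsplit, lintegral_mul_past hεmeas hindep hident hφ hΨ, ih, pow_succ]
    ring

end IIDSequence

section Interpolation

variable {Ω : Type*} [MeasurableSpace Ω] {P : Measure Ω}

theorem eLpNorm_two_le_of_sq_le {F a b : Ω → ℝ} {C κ : ℝ} (hC : 0 ≤ C) (hκ₀ : 0 ≤ κ)
    (hκ₁ : κ ≤ 1) (ha : AEMeasurable a P) (hb : AEMeasurable b P) (ha₀ : ∀ᵐ ω ∂P, 0 ≤ a ω)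
    (hb₀ : ∀ᵐ ω ∂P, 0 ≤ b ω) (hF : ∀ᵐ ω ∂P, F ω ^ 2 ≤ C * (a ω ^ κ * b ω ^ (1 - κ))) :
    eLpNorm F 2 P ≤ (ENNReal.ofReal C *
      ((∫⁻ ω, ENNReal.ofReal (a ω) ∂P) ^ κ * (∫⁻ ω, ENNReal.ofReal (b ω) ∂P) ^ (1 - κ))) ^
        (1 / 2 : ℝ) := by
  rw [eLpNorm_eq_lintegral_rpow_enorm_toReal two_ne_zero ENNReal.ofNat_ne_top,
    ENNReal.toReal_ofNat]
  gcongr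
  calc ∫⁻ ω, ‖F ω‖ₑ ^ (2 : ℝ) ∂P
      ≤ ∫⁻ ω, ENNReal.ofReal C *
          (ENNReal.ofReal (a ω) ^ κ * ENNReal.ofReal (b ω) ^ (1 - κ)) ∂P := by
        refine lintegral_mono_ae ?_
        filter_upwards [ha₀, hb₀, hF] with ω haω hbω hFω
        rw [Real.enorm_eq_ofReal_abs, ENNReal.ofReal_rpow_of_nonneg (abs_nonneg _) zero_le_two,
          ENNReal.ofReal_rpow_of_nonneg haω hκ₀, ENNReal.ofReal_rpow_of_nonneg hbω (by linarith),
          ← ENNReal.ofReal_mul (by positivity), ← ENNReal.ofReal_mul hC]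
        refine ENNReal.ofReal_le_ofReal ?_
        simpa [Real.rpow_two, sq_abs] using hFω
    _ = ENNReal.ofReal C * ∫⁻ ω, ENNReal.ofReal (a ω) ^ κ * ENNReal.ofReal (b ω) ^ (1 - κ) ∂P :=
        lintegral_const_mul' _ _ ENNReal.ofReal_ne_top
    _ ≤ _ := by
        gcongr
        exact ENNReal.lintegral_mul_norm_pow_le ha.ennreal_ofReal hb.ennreal_ofReal hκ₀
          (by linarith) (by ring)

end Interpolation

theorem exists_lt_one_pow_mul_le {ρ K : ℝ≥0∞} (hK : K ≠ ⊤)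
    (h : Tendsto (fun m : ℕ => ρ ^ m * K) atTop (𝓝 0)) :
    ∃ r < 1, ∀ m : ℕ, ρ ^ m * K ≤ r ^ m * K := by
  rcases eq_or_ne K 0 with rfl | hK₀
  · exact ⟨0, zero_lt_one, fun m => by simp⟩
  refine ⟨ρ, ?_, fun m => le_rfl⟩
  by_contra! hρ
  have hlim : K ≤ 0 := ge_of_tendsto' h fun m => le_mul_of_one_le_left' (one_le_pow₀ hρ)
  exact hK₀ (nonpos_iff_eq_zero.1 hlim)

theorem exists_real_geometric_bound {u : ℕ → ℝ≥0∞} {C τ : ℝ≥0∞} (hC : C ≠ ⊤) (hτ : τ < 1)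
    (hu : ∀ m, u m ≤ C * τ ^ m) :
    ∃ C₁ > (0 : ℝ), ∃ ϱ : ℝ, 0 < ϱ ∧ ϱ < 1 ∧ ∀ m, u m ≤ ENNReal.ofReal (C₁ * ϱ ^ m) := by
  refine ⟨C.toReal + 1, by positivity, max τ.toReal (1 / 2), by positivity,
    max_lt (ENNReal.toReal_lt_of_lt_ofReal (by simpa using hτ)) (by norm_num), fun m => ?_⟩
  rw [ENNReal.ofReal_mul (by positivity), ENNReal.ofReal_pow (by positivity)]
  refine (hu m).trans (mul_le_mul' ?_ (pow_le_pow_left₀ zero_le ?_ m))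
  · exact (ENNReal.ofReal_toReal hC).symm.le.trans (ENNReal.ofReal_le_ofReal (by linarith))
  · exact (ENNReal.ofReal_toReal hτ.ne_top).symm.le.trans
      (ENNReal.ofReal_le_ofReal (le_max_left _ _))

theorem exists_geometric_bound {C ρ K : ℝ≥0∞} {κ : ℝ} (hC : C ≠ ⊤) (hK : K ≠ ⊤) (hκ₀ : 0 < κ)
    (hκ₁ : κ ≤ 1) (h : Tendsto (fun m : ℕ => ρ ^ m * K) atTop (𝓝 0)) :
    ∃ C₁ > (0 : ℝ), ∃ ϱ : ℝ, 0 < ϱ ∧ ϱ < 1 ∧ ∀ m : ℕ,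
      (C * ((ρ ^ m * K) ^ κ * K ^ (1 - κ))) ^ (1 / 2 : ℝ) ≤ ENNReal.ofReal (C₁ * ϱ ^ m) := by
  obtain ⟨r, hr, hρr⟩ := exists_lt_one_pow_mul_le hK h
  refine exists_real_geometric_bound (C := (C * K) ^ (1 / 2 : ℝ)) (τ := r ^ (κ / 2))
    (ENNReal.rpow_ne_top_of_nonneg (by norm_num) (ENNReal.mul_ne_top hC hK))
    (ENNReal.rpow_lt_one hr (by positivity)) fun m => ?_
  have hpow (x : ℝ≥0∞) (t : ℝ) : (x ^ m) ^ t = (x ^ t) ^ m := by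
    rw [← ENNReal.rpow_natCast, ← ENNReal.rpow_mul, mul_comm, ENNReal.rpow_mul,
      ENNReal.rpow_natCast]
  calc (C * ((ρ ^ m * K) ^ κ * K ^ (1 - κ))) ^ (1 / 2 : ℝ)
      ≤ (C * ((r ^ m * K) ^ κ * K ^ (1 - κ))) ^ (1 / 2 : ℝ) := by
        gcongr (C * (?_ ^ κ * _)) ^ _
        exact hρr m
    _ = (C * K) ^ (1 / 2 : ℝ) * (r ^ (κ / 2)) ^ m := by
      rw [ENNReal.mul_rpow_of_nonneg _ _ hκ₀.le, mul_assoc,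
        ← ENNReal.rpow_add_of_nonneg _ _ hκ₀.le (by linarith), add_sub_cancel, ENNReal.rpow_one,
        mul_left_comm, ENNReal.mul_rpow_of_nonneg _ _ (by norm_num), hpow, hpow, ← ENNReal.rpow_mul,
        mul_one_div, mul_comm]

section GARCH

variable {Ω : Type*} {ε X : ℤ → Ω → ℝ} {c g : ℝ → ℝ}

noncomputable def tailWeight (c g : ℝ → ℝ) (ε X : ℤ → Ω → ℝ) (s p : ℝ) (k : ℤ) (m : ℕ)
    (ω : Ω) : ℝ :=
  (X k ω - partialSum c g (past ε k ω) m) ^ s * |ε k ω| ^ p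

theorem tailWeight_nonneg {s p : ℝ} {k : ℤ} {m : ℕ} {ω : Ω}
    (h : partialSum c g (past ε k ω) m ≤ X k ω) : 0 ≤ tailWeight c g ε X s p k m ω :=
  mul_nonneg (Real.rpow_nonneg (sub_nonneg.2 h) _) (Real.rpow_nonneg (abs_nonneg _) _)

variable {f : ℝ → ℝ} {ν γ : ℝ}

theorem tailWeight_zero_eq_sq (hf : IsPowerTransform ν f)
    (hν : ν ≠ 0) {k : ℤ} {ω : Ω} (hX : 0 ≤ X k ω) :
    tailWeight c g ε X (2 * (γ * ν)) (2 * ν) k 0 ω = f (X k ω ^ γ * ε k ω) ^ 2 := by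
  rw [hf.apply_rpow_mul hν hX, mul_pow, hf.sq_apply hν, ← Real.rpow_mul_natCast hX]
  simp only [tailWeight, partialSum_zero, sub_zero, Nat.cast_ofNat, mul_comm _ (2 : ℝ)]

theorem sq_sub_le_tailWeight
    (hf : IsPowerTransform ν f) (hν : ν ≠ 0)
    (hα : 0 < γ * ν) {k : ℤ} {m : ℕ} {ω : Ω} (h₀ : 0 ≤ partialSum c g (past ε k ω) m)
    (hle : partialSum c g (past ε k ω) m ≤ X k ω) :
    (f (X k ω ^ γ * ε k ω) - f (partialSum c g (past ε k ω) m ^ γ * ε k ω)) ^ 2 ≤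
      max (γ * ν) 1 ^ 2 *
        (tailWeight c g ε X (2 * (γ * ν)) (2 * ν) k m ω ^ (min (γ * ν) 1 / (γ * ν)) *
          tailWeight c g ε X (2 * (γ * ν)) (2 * ν) k 0 ω ^ (1 - min (γ * ν) 1 / (γ * ν))) := by
  rw [hf.apply_rpow_mul hν (h₀.trans hle), hf.apply_rpow_mul hν h₀, ← sub_mul, mul_pow,
    hf.sq_apply hν]
  simp only [tailWeight, partialSum_zero, sub_zero]
  exact sq_rpow_sub_rpow_mul_le hα h₀ hle (by positivity)

variable [MeasurableSpace Ω] {P : Measure Ω}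

-- The remainder `X_k - X_{k,m} = c(ε_{k-1}) ⋯ c(ε_{k-m}) X_{k-m}` is a product of independent
-- factors, all independent of `ε_k`.
theorem lintegral_ofReal_sub_partialSum_rpow_mul (hεmeas : ∀ k, Measurable (ε k))
    (hindep : iIndepFun ε P) (hident : ∀ k, IdentDistrib (ε k) (ε 0) P P)
    (hc : Measurable c) (hg : Measurable g)
    (hpos : ∀ᵐ ω ∂P, ∀ i, 0 ≤ c (ε i ω) ∧ 0 ≤ g (ε i ω))
    (hX : ∀ k, ∀ᵐ ω ∂P, Tendsto (partialSum c g (past ε k ω)) atTop (𝓝 (X k ω)))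
    {s : ℝ} (hs : 0 ≤ s) {ψ : ℝ → ℝ≥0∞} (hψ : Measurable ψ) (k : ℤ) (m : ℕ) :
    ∫⁻ ω, ENNReal.ofReal (X k ω - partialSum c g (past ε k ω) m) ^ s * ψ (ε k ω) ∂P =
      (∫⁻ ω, ENNReal.ofReal (c (ε 0 ω)) ^ s ∂P) ^ m *
        ((∫⁻ ω, ENNReal.ofReal (X 0 ω) ^ s ∂P) * ∫⁻ ω, ψ (ε 0 ω) ∂P) := by
  have hφ : Measurable fun x => ENNReal.ofReal (c x) ^ s := hc.ennreal_ofReal.pow_const s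
  have hΦ : Measurable fun w => seriesSum c g w ^ s := (measurable_seriesSum hc hg).pow_const s
  have hΨ : Measurable fun w : ℕ → ℝ =>
      (∏ j ∈ range m, ENNReal.ofReal (c (w j)) ^ s) * seriesSum c g (fun i => w (m + i)) ^ s :=
    (measurable_prod _ fun j _ => hφ.comp (measurable_pi_apply j)).mul
      (hΦ.comp (measurable_pi_lambda _ fun i => measurable_pi_apply _))
  have hsplit : ∀ᵐ ω ∂P, ENNReal.ofReal (X k ω - partialSum c g (past ε k ω) m) ^ s * ψ (ε k ω)
      = ψ (ε k ω) * ((∏ j ∈ range m, ENNReal.ofReal (c (past ε k ω j)) ^ s) *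
        seriesSum c g (fun i => past ε k ω (m + i)) ^ s) := by
    filter_upwards [hpos, hX k] with ω hω hXω
    rw [ofReal_sub_partialSum (w := past ε k ω) (fun i => (hω _).1) (fun i => (hω _).2) hXω,
      ENNReal.mul_rpow_of_nonneg _ _ hs,
      ENNReal.ofReal_prod_of_nonneg (f := fun j => c (past ε k ω j)) fun j _ => (hω _).1,
      ENNReal.prod_rpow_of_nonneg hs, mul_comm]
  have hseries :
      ∫⁻ ω, seriesSum c g (past ε 0 ω) ^ s ∂P = ∫⁻ ω, ENNReal.ofReal (X 0 ω) ^ s ∂P := by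
    refine lintegral_congr_ae ?_
    filter_upwards [hpos, hX 0] with ω hω hXω
    rw [seriesSum_eq_ofReal (w := past ε 0 ω) (fun i => (hω _).1) (fun i => (hω _).2) hXω]
  rw [lintegral_congr_ae hsplit, lintegral_mul_past hεmeas hindep hident hψ hΨ,
    lintegral_prod_mul_past hεmeas hindep hident hφ hΦ, hseries]
  ring

theorem ae_forall_partialSum_nonneg_le (hpos : ∀ᵐ ω ∂P, ∀ i, 0 ≤ c (ε i ω) ∧ 0 ≤ g (ε i ω))
    (hX : ∀ k, ∀ᵐ ω ∂P, Tendsto (partialSum c g (past ε k ω)) atTop (𝓝 (X k ω))) :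
    ∀ᵐ ω ∂P, ∀ k m, 0 ≤ partialSum c g (past ε k ω) m ∧ partialSum c g (past ε k ω) m ≤ X k ω := by
  filter_upwards [hpos, ae_all_iff.2 hX] with ω hω hXω k m
  exact ⟨partialSum_nonneg (fun i => (hω _).1) (fun i => (hω _).2) m,
    partialSum_le_of_tendsto (fun i => (hω _).1) (fun i => (hω _).2) (hXω k) m⟩

theorem measurable_tailWeight (hεmeas : ∀ k, Measurable (ε k)) (hc : Measurable c)
    (hg : Measurable g) (hXmeas : ∀ k, Measurable (X k)) (s p : ℝ) (k : ℤ) (m : ℕ) :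
    Measurable (tailWeight c g ε X s p k m) :=
  (((hXmeas k).sub ((measurable_partialSum hc hg m).comp (measurable_past hεmeas k))).pow_const
    s).mul ((hεmeas k).abs.pow_const p)

theorem lintegral_ofReal_tailWeight (hεmeas : ∀ k, Measurable (ε k)) (hindep : iIndepFun ε P)
    (hident : ∀ k, IdentDistrib (ε k) (ε 0) P P) (hc : Measurable c) (hg : Measurable g)
    (hpos : ∀ᵐ ω ∂P, ∀ i, 0 ≤ c (ε i ω) ∧ 0 ≤ g (ε i ω))
    (hX : ∀ k, ∀ᵐ ω ∂P, Tendsto (partialSum c g (past ε k ω)) atTop (𝓝 (X k ω)))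
    {s : ℝ} (hs : 0 ≤ s) (p : ℝ) (k : ℤ) (m : ℕ) :
    ∫⁻ ω, ENNReal.ofReal (tailWeight c g ε X s p k m ω) ∂P =
      (∫⁻ ω, ENNReal.ofReal (c (ε 0 ω)) ^ s ∂P) ^ m *
        ((∫⁻ ω, ENNReal.ofReal (X 0 ω) ^ s ∂P) * ∫⁻ ω, ENNReal.ofReal (|ε 0 ω| ^ p) ∂P) := by
  rw [← lintegral_ofReal_sub_partialSum_rpow_mul hεmeas hindep hident hc hg hpos hX hs
    (measurable_abs.pow_const p).ennreal_ofReal k m]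
  refine lintegral_congr_ae ?_
  filter_upwards [ae_forall_partialSum_nonneg_le hpos hX] with ω hω
  have hrem := sub_nonneg.2 (hω k m).2
  rw [tailWeight, ENNReal.ofReal_mul (Real.rpow_nonneg hrem _),
    ENNReal.ofReal_rpow_of_nonneg hrem hs]

theorem tendsto_lintegral_ofReal_tailWeight (hεmeas : ∀ k, Measurable (ε k))
    (hc : Measurable c) (hg : Measurable g) (hXmeas : ∀ k, Measurable (X k))
    (hpos : ∀ᵐ ω ∂P, ∀ i, 0 ≤ c (ε i ω) ∧ 0 ≤ g (ε i ω))
    (hX : ∀ k, ∀ᵐ ω ∂P, Tendsto (partialSum c g (past ε k ω)) atTop (𝓝 (X k ω)))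
    {s : ℝ} (hs : 0 < s) (p : ℝ) (k : ℤ)
    (hfin : ∫⁻ ω, ENNReal.ofReal (tailWeight c g ε X s p k 0 ω) ∂P ≠ ⊤) :
    Tendsto (fun m => ∫⁻ ω, ENNReal.ofReal (tailWeight c g ε X s p k m ω) ∂P) atTop (𝓝 0) := by
  have hlim := tendsto_lintegral_of_dominated_convergence (f := 0)
    (F := fun m ω => ENNReal.ofReal (tailWeight c g ε X s p k m ω)) _
    (fun m => (measurable_tailWeight hεmeas hc hg hXmeas s p k m).ennreal_ofReal)
    (fun m => by
      filter_upwards [ae_forall_partialSum_nonneg_le hpos hX] with ω hω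
      refine ENNReal.ofReal_le_ofReal ?_
      simp only [tailWeight, partialSum_zero, sub_zero]
      gcongr
      · exact sub_nonneg.2 (hω k m).2
      · exact sub_le_self _ (hω k m).1)
    hfin (by
      filter_upwards [hX k] with ω hXω
      have hrem : Tendsto (fun m => X k ω - partialSum c g (past ε k ω) m) atTop (𝓝 0) := by
        simpa using hXω.const_sub (X k ω)
      have hw := ((Real.continuousAt_rpow_const 0 s (Or.inr hs.le)).tendsto.comp hrem).mul_const
        (|ε k ω| ^ p)
      simpa [tailWeight, Function.comp_def, Real.zero_rpow hs.ne'] using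
        (ENNReal.continuous_ofReal.tendsto _).comp hw)
  simpa using hlim

end GARCH

end AugmentedGARCH

open AugmentedGARCH

theorem polynomial_garch_L2_approximation_general
    {Ω : Type*} [MeasurableSpace Ω] (P : Measure Ω)
    (ε : ℤ → Ω → ℝ) (c g : ℝ → ℝ)
    (hc : Measurable c) (hg : Measurable g)
    (hεmeas : ∀ k, Measurable (ε k))
    (hindep : iIndepFun ε P)
    (hident : ∀ k, IdentDistrib (ε k) (ε 0) P P)
    (δ ν : ℝ) (hδ : 0 < δ) (hν : 0 < ν)
    (hcpos : ∀ᵐ ω ∂P, 0 ≤ c (ε 0 ω)) (hgpos : ∀ᵐ ω ∂P, 0 ≤ g (ε 0 ω))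
    (f : ℝ → ℝ)
    (hf : (∀ x, f x = |x| ^ ν) ∨ (∀ x, f x = Real.sign x * |x| ^ ν))
    (X : ℤ → Ω → ℝ) (hXmeas : ∀ k, Measurable (X k))
    (hX : ∀ k : ℤ, ∀ᵐ ω ∂P, Tendsto
      (fun m => ∑ i ∈ Finset.range m,
        g (ε (k - (i + 1)) ω) * ∏ j ∈ Finset.range i, c (ε (k - (j + 1)) ω))
      atTop (nhds (X k ω)))
    (Xm : ℤ → ℕ → Ω → ℝ)
    (hXm : ∀ k m ω, Xm k m ω = ∑ i ∈ Finset.range m,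
      g (ε (k - (i + 1)) ω) * ∏ j ∈ Finset.range i, c (ε (k - (j + 1)) ω))
    (η : ℤ → Ω → ℝ) (hη : ∀ k ω, η k ω = f (X k ω ^ (1 / (2 * δ)) * ε k ω))
    (ηm : ℤ → ℕ → Ω → ℝ)
    (hηm : ∀ k m ω, ηm k m ω = f (Xm k m ω ^ (1 / (2 * δ)) * ε k ω))
    (hmom : ∫⁻ ω, ENNReal.ofReal ((η 0 ω) ^ 2) ∂P < ⊤) :
    ∃ C₁ > (0 : ℝ), ∃ ϱ : ℝ, 0 < ϱ ∧ ϱ < 1 ∧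
      ∀ k : ℤ, ∀ m : ℕ, 1 ≤ m →
        eLpNorm (fun ω => η k ω - ηm k m ω) 2 P ≤ ENNReal.ofReal (C₁ * ϱ ^ m) := by
  set α := 1 / (2 * δ) * ν
  have hα : 0 < α := by positivity
  have hκ₀ : 0 < min α 1 / α := div_pos (lt_min hα one_pos) hα
  have hκ₁ : min α 1 / α ≤ 1 := (div_le_one hα).2 (min_le_left _ _)
  have hpos : ∀ᵐ ω ∂P, ∀ i, 0 ≤ c (ε i ω) ∧ 0 ≤ g (ε i ω) :=
    ae_forall_of_identDistrib hident
      ((measurableSet_le measurable_const hc).inter (measurableSet_le measurable_const hg))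
      (hcpos.and hgpos)
  have hrange := ae_forall_partialSum_nonneg_le hpos hX
  have hweight := measurable_tailWeight hεmeas hc hg hXmeas (2 * α) (2 * ν)
  have hL2 (k : ℤ) (m : ℕ) := eLpNorm_two_le_of_sq_le (F := fun ω => η k ω - ηm k m ω)
    (sq_nonneg (max α 1)) hκ₀.le hκ₁ (hweight k m).aemeasurable (hweight k 0).aemeasurable
    (hrange.mono fun ω h => tailWeight_nonneg (h k m).2)
    (hrange.mono fun ω h => tailWeight_nonneg (h k 0).2)
    (hrange.mono fun ω h => by
      rw [hη, hηm, hXm]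
      exact sq_sub_le_tailWeight hf hν.ne' hα (h k m).1 (h k m).2)
  have hK : ∫⁻ ω, ENNReal.ofReal (tailWeight c g ε X (2 * α) (2 * ν) 0 0 ω) ∂P =
      ∫⁻ ω, ENNReal.ofReal (η 0 ω ^ 2) ∂P :=
    lintegral_congr_ae (hrange.mono fun ω h => by
      beta_reduce
      rw [hη, tailWeight_zero_eq_sq hf hν.ne' ((h 0 0).1.trans (h 0 0).2)])
  have hfin := (hK.trans_lt hmom).ne
  have hdecay := tendsto_lintegral_ofReal_tailWeight hεmeas hc hg hXmeas hpos hX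
    (by positivity : 0 < 2 * α) (2 * ν) 0 hfin
  simp only [lintegral_ofReal_tailWeight hεmeas hindep hident hc hg hpos hX
    (by positivity : 0 ≤ 2 * α), pow_zero, one_mul] at hL2 hdecay hfin
  obtain ⟨C₁, hC₁, ϱ, hϱ₀, hϱ₁, hbound⟩ :=
    exists_geometric_bound ENNReal.ofReal_ne_top hfin hκ₀ hκ₁ hdecay
  exact ⟨C₁, hC₁, ϱ, hϱ₀, hϱ₁, fun k m _ => (hL2 k m).trans (hbound m)⟩

/-- **Lemma 1.** For a polynomial augmented GARCH process (`σ_k = X_k^{1/(2δ)}`,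
`y_k = σ_k ε_k`, with truncated versions built from the partial sums `X_{k,m}`), if
`E η₀² < ∞` where `η_k = f(y_k)` with `f(x) = |x|^ν` or `f(x) = sign(x)|x|^ν`, then there
are constants `C₁ > 0` and `0 < ϱ < 1` with `‖η_k − η_{k,m}‖₂ ≤ C₁ ϱ^m` for all `k`, `m ≥ 1`. -/
theorem polynomial_garch_L2_approximation
    {Ω : Type*} [MeasurableSpace Ω] (P : Measure Ω) [IsProbabilityMeasure P]
    (ε : ℤ → Ω → ℝ) (c g : ℝ → ℝ)
    (hc : Measurable c) (hg : Measurable g)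
    (hεmeas : ∀ k, Measurable (ε k))
    (hindep : iIndepFun ε P)
    (hident : ∀ k, IdentDistrib (ε k) (ε 0) P P)
    (δ ν : ℝ) (hδ : 0 < δ) (hν : 0 < ν)
    (hcpos : ∀ᵐ ω ∂P, 0 ≤ c (ε 0 ω)) (hgpos : ∀ᵐ ω ∂P, 0 ≤ g (ε 0 ω))
    (f : ℝ → ℝ)
    (hf : (∀ x, f x = |x| ^ ν) ∨ (∀ x, f x = Real.sign x * |x| ^ ν))
    (X : ℤ → Ω → ℝ) (hXmeas : ∀ k, Measurable (X k))
    (hX : ∀ k : ℤ, ∀ᵐ ω ∂P, Tendsto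
      (fun m => ∑ i ∈ Finset.range m,
        g (ε (k - (i + 1)) ω) * ∏ j ∈ Finset.range i, c (ε (k - (j + 1)) ω))
      atTop (nhds (X k ω)))
    (Xm : ℤ → ℕ → Ω → ℝ)
    (hXm : ∀ k m ω, Xm k m ω = ∑ i ∈ Finset.range m,
      g (ε (k - (i + 1)) ω) * ∏ j ∈ Finset.range i, c (ε (k - (j + 1)) ω))
    (η : ℤ → Ω → ℝ) (hη : ∀ k ω, η k ω = f (X k ω ^ (1 / (2 * δ)) * ε k ω))
    (ηm : ℤ → ℕ → Ω → ℝ)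
    (hηm : ∀ k m ω, ηm k m ω = f (Xm k m ω ^ (1 / (2 * δ)) * ε k ω))
    (hmom : ∫⁻ ω, ENNReal.ofReal ((η 0 ω) ^ 2) ∂P < ⊤) :
    ∃ C₁ > (0 : ℝ), ∃ ϱ : ℝ, 0 < ϱ ∧ ϱ < 1 ∧
      ∀ k : ℤ, ∀ m : ℕ, 1 ≤ m →
        eLpNorm (fun ω => η k ω - ηm k m ω) 2 P ≤ ENNReal.ofReal (C₁ * ϱ ^ m) :=
  polynomial_garch_L2_approximation_general P ε c g hc hg hεmeas hindep hident δ ν hδ hν hcpos hgpos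
    f hf X hXmeas hX Xm hXm η hη ηm hηm hmom
end

section
/- Let μ > ν > 0. Assume there is a constant c with 0 ≤ c < 1 such that |c(ε₀)| ≤ c almost surely, E[exp(μ|g(ε₀)|)] < ∞, E[|ε₀|^{2μ}] < ∞, and E[η₀²] < ∞. Then there exists a constant C₂ > 0 such that for all k ∈ ℤ and all m ≥ 1, (E[(η_k − η_{k,m})²])^{1/2} ≤ C₂ c^m. -/
open MeasureTheory ProbabilityTheory Filter Real
open scoped ENNReal Topology

/-!
Since `f` is positively homogeneous of degree `ν`,
`η_{k,n} − η_{k,m} = (e^{ν X_{k,n}/2} − e^{ν X_{k,m}/2}) f(ε_k)`. With `G_i = |g(ε_{k-i-1})|`,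
`S = ∑_{i<n} c^i G_i` and `T = ∑_{m≤i<n} c^{i-m} G_i`, one has `|X_{k,n}|, |X_{k,m}| ≤ S` and
`|X_{k,n} − X_{k,m}| ≤ c^m T`, so the mean value bound and `T² ≤ (2/δ²) e^{δT}` (`δ = μ − ν`) give
`(η_{k,n} − η_{k,m})² ≲ c^{2m} |ε_k|^{2ν} e^{νS + δT}`. Now `νS + δT = ∑ λ_i G_i` with `0 ≤ λ_i ≤ μ`
and `∑ λ_i ≤ μ/(1 − c)`; by convexity `E e^{λ G} ≤ 1 + (λ/μ)(E e^{μ G} − 1)`, and independence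
turns the expectation of the product into a product of expectations bounded uniformly in `n`.
This bounds `‖η_{k,n} − η_{k,m}‖₂` by `C c^m` for all `n ≥ m`, and Fatou's lemma lets `n → ∞`.
-/

namespace Real

lemma abs_exp_sub_exp_le (a b : ℝ) : |exp a - exp b| ≤ |a - b| * exp (max a b) := by
  wlog hba : b ≤ a generalizing a b
  · simpa only [abs_sub_comm, max_comm] using this b a (le_of_not_ge hba)
  have key : exp a - exp b ≤ (a - b) * exp a := by
    have := add_one_le_exp (b - a)
    rw [exp_sub, le_div_iff₀ (exp_pos a)] at this
    nlinarith
  rwa [abs_of_nonneg (sub_nonneg.2 (exp_le_exp.2 hba)), abs_of_nonneg (sub_nonneg.2 hba),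
    max_eq_left hba]

lemma sq_le_mul_exp {δ x : ℝ} (hδ : 0 < δ) (hx : 0 ≤ x) : x ^ 2 ≤ 2 / δ ^ 2 * exp (δ * x) := by
  have h := pow_div_factorial_le_exp _ (mul_nonneg hδ.le hx) 2
  rw [Nat.factorial_two, Nat.cast_two, mul_pow] at h
  rw [div_mul_eq_mul_div, le_div_iff₀ (by positivity)]
  linarith

lemma exp_mul_le_one_sub_div_add_div_mul_exp {l μ : ℝ} (hμ : 0 < μ) (hl : 0 ≤ l) (hlμ : l ≤ μ)
    (z : ℝ) :
    exp (l * z) ≤ 1 - l / μ + l / μ * exp (μ * z) := by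
  have h := convexOn_exp.2 (Set.mem_univ 0) (Set.mem_univ (μ * z))
    (sub_nonneg.2 (div_le_one_of_le₀ hlμ hμ.le)) (div_nonneg hl hμ.le) (sub_add_cancel 1 _)
  simp only [smul_eq_mul, mul_zero, zero_add, exp_zero, mul_one] at h
  rwa [← mul_assoc, div_mul_cancel₀ _ hμ.ne'] at h

lemma rpow_le_one_add_rpow {x p q : ℝ} (hx : 0 ≤ x) (hp : 0 ≤ p) (hpq : p ≤ q) :
    x ^ p ≤ 1 + x ^ q := by
  rcases le_total x 1 with h | h
  · linarith [rpow_le_one hx h hp, rpow_nonneg hx q]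
  · linarith [rpow_le_rpow_of_exponent_le h hpq]

end Real

def IsPowerTransform (f : ℝ → ℝ) (ν : ℝ) : Prop :=
  (∀ x, f x = |x| ^ ν) ∨ (∀ x, f x = Real.sign x * |x| ^ ν)

namespace IsPowerTransform

variable {f : ℝ → ℝ} {ν : ℝ}

lemma map_mul (hf : IsPowerTransform f ν) {r : ℝ} (hr : 0 < r) (x : ℝ) :
    f (r * x) = r ^ ν * f x := by
  have habs : |r * x| ^ ν = r ^ ν * |x| ^ ν := by
    rw [abs_mul, abs_of_pos hr, mul_rpow hr.le (abs_nonneg x)]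
  rcases hf with hf | hf
  · rw [hf, hf, habs]
  · have hsign : Real.sign (r * x) = Real.sign x := by
      rcases lt_trichotomy x 0 with hx | rfl | hx
      · rw [Real.sign_of_neg hx, Real.sign_of_neg (mul_neg_of_pos_of_neg hr hx)]
      · rw [mul_zero]
      · rw [Real.sign_of_pos hx, Real.sign_of_pos (mul_pos hr hx)]
    rw [hf, hf, hsign, habs]
    ring

lemma abs_apply_le (hf : IsPowerTransform f ν) (x : ℝ) : |f x| ≤ |x| ^ ν := by
  have hpow := rpow_nonneg (abs_nonneg x) ν
  rcases hf with hf | hf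
  · rw [hf, abs_of_nonneg hpow]
  · rw [hf, abs_mul, abs_of_nonneg hpow]
    refine mul_le_of_le_one_left hpow ?_
    rcases Real.sign_apply_eq x with h | h | h <;> simp [h]

lemma measurable (hf : IsPowerTransform f ν) : Measurable f := by
  rcases hf with hf | hf
  · rw [funext hf]; fun_prop
  · rw [funext hf]
    refine Measurable.mul ?_ (by fun_prop)
    exact Measurable.ite (measurableSet_lt measurable_id measurable_const) measurable_const
      (Measurable.ite (measurableSet_lt measurable_const measurable_id) measurable_const
        measurable_const)

end IsPowerTransform

/-- Writing the tail `∑_{m ≤ i < n} c^(i-m) G i` over the full range `i < n` lets it be added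
termwise to `∑_{i<n} c^i G i`. -/
def tailWeight (c : ℝ) (m i : ℕ) : ℝ := if m ≤ i then c ^ (i - m) else 0

section TailWeight

variable {c : ℝ} {m : ℕ}

lemma tailWeight_nonneg (hc : 0 ≤ c) (i : ℕ) : 0 ≤ tailWeight c m i := by
  unfold tailWeight; split_ifs <;> positivity

lemma tailWeight_le_one (hc₀ : 0 ≤ c) (hc₁ : c ≤ 1) (i : ℕ) : tailWeight c m i ≤ 1 := by
  unfold tailWeight; split_ifs
  · exact pow_le_one₀ hc₀ hc₁
  · exact zero_le_one

lemma sum_range_tailWeight_mul (a : ℕ → ℝ) (n : ℕ) :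
    ∑ i ∈ Finset.range n, tailWeight c m i * a i = ∑ i ∈ Finset.Ico m n, c ^ (i - m) * a i := by
  simp only [tailWeight, ite_mul, zero_mul]
  rw [← Finset.sum_filter, Finset.range_eq_Ico, Finset.Ico_filter_le, max_eq_right (Nat.zero_le m)]

lemma sum_range_pow_le (hc₀ : 0 ≤ c) (hc₁ : c < 1) (n : ℕ) :
    ∑ i ∈ Finset.range n, c ^ i ≤ 1 / (1 - c) := by
  simpa only [← Finset.range_eq_Ico, pow_zero] using
    geom_sum_Ico_le_of_lt_one (m := 0) (n := n) hc₀ hc₁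

lemma sum_range_tailWeight_le (hc₀ : 0 ≤ c) (hc₁ : c < 1) (n : ℕ) :
    ∑ i ∈ Finset.range n, tailWeight c m i ≤ 1 / (1 - c) := by
  have h := sum_range_tailWeight_mul (c := c) (m := m) (fun _ => 1) n
  simp only [mul_one] at h
  rw [h, Finset.sum_Ico_eq_sum_range]
  simp only [Nat.add_sub_cancel_left]
  exact sum_range_pow_le hc₀ hc₁ _

variable {ν δ : ℝ}

lemma mul_pow_add_mul_tailWeight_le (hν : 0 ≤ ν) (hδ : 0 ≤ δ) (hc₀ : 0 ≤ c) (hc₁ : c ≤ 1)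
    (i : ℕ) : ν * c ^ i + δ * tailWeight c m i ≤ ν + δ := by
  gcongr
  · exact mul_le_of_le_one_right hν (pow_le_one₀ hc₀ hc₁)
  · exact mul_le_of_le_one_right hδ (tailWeight_le_one hc₀ hc₁ i)

lemma sum_range_mul_pow_add_mul_tailWeight_le (hν : 0 ≤ ν) (hδ : 0 ≤ δ) (hc₀ : 0 ≤ c)
    (hc₁ : c < 1) (n : ℕ) :
    ∑ i ∈ Finset.range n, (ν * c ^ i + δ * tailWeight c m i) ≤ (ν + δ) / (1 - c) := by
  rw [Finset.sum_add_distrib, ← Finset.mul_sum, ← Finset.mul_sum, add_div, div_eq_mul_one_div ν,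
    div_eq_mul_one_div δ]
  gcongr
  exacts [sum_range_pow_le hc₀ hc₁ n, sum_range_tailWeight_le hc₀ hc₁ n]

end TailWeight

section PartialSums

variable {c : ℝ} {t G : ℕ → ℝ}

lemma abs_sum_range_le_of_abs_le (ht : ∀ i, |t i| ≤ c ^ i * G i) (n : ℕ) :
    |∑ i ∈ Finset.range n, t i| ≤ ∑ i ∈ Finset.range n, c ^ i * G i :=
  (Finset.abs_sum_le_sum_abs _ _).trans (Finset.sum_le_sum fun i _ => ht i)

lemma abs_sum_range_sub_sum_range_le (ht : ∀ i, |t i| ≤ c ^ i * G i) {m n : ℕ}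
    (hmn : m ≤ n) :
    |∑ i ∈ Finset.range n, t i - ∑ i ∈ Finset.range m, t i|
      ≤ c ^ m * ∑ i ∈ Finset.range n, tailWeight c m i * G i := by
  rw [← Finset.sum_Ico_eq_sub _ hmn, sum_range_tailWeight_mul, Finset.mul_sum]
  refine (Finset.abs_sum_le_sum_abs _ _).trans (Finset.sum_le_sum fun i hi => ?_)
  rw [← mul_assoc, ← pow_add, Nat.add_sub_cancel' (Finset.mem_Ico.1 hi).1]
  exact ht i

lemma sq_exp_sum_range_sub_le (hc : 0 ≤ c) {q δ : ℝ} (hq : 0 ≤ q) (hδ : 0 < δ)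
    (hG : ∀ i, 0 ≤ G i) (ht : ∀ i, |t i| ≤ c ^ i * G i) {m n : ℕ} (hmn : m ≤ n) :
    (exp ((∑ i ∈ Finset.range n, t i) / 2 * q) - exp ((∑ i ∈ Finset.range m, t i) / 2 * q)) ^ 2
      ≤ q ^ 2 / (2 * δ ^ 2) * (c ^ m) ^ 2
        * exp (∑ i ∈ Finset.range n, (q * c ^ i + δ * tailWeight c m i) * G i) := by
  set S := ∑ i ∈ Finset.range n, c ^ i * G i
  set T := ∑ i ∈ Finset.range n, tailWeight c m i * G i
  have hT : 0 ≤ T := Finset.sum_nonneg fun i _ => mul_nonneg (tailWeight_nonneg hc i) (hG i)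
  have hSn : ∑ i ∈ Finset.range n, t i ≤ S :=
    (le_abs_self _).trans (abs_sum_range_le_of_abs_le ht n)
  have hSm : ∑ i ∈ Finset.range m, t i ≤ S :=
    (le_abs_self _).trans ((abs_sum_range_le_of_abs_le ht m).trans
      (Finset.sum_le_sum_of_subset_of_nonneg (Finset.range_subset_range.2 hmn)
        fun i _ _ => mul_nonneg (pow_nonneg hc i) (hG i)))
  have hdiff : |(∑ i ∈ Finset.range n, t i) / 2 * q - (∑ i ∈ Finset.range m, t i) / 2 * q|
      ≤ q / 2 * (c ^ m * T) := by
    rw [← sub_mul, ← sub_div, abs_mul, abs_div, abs_two, abs_of_nonneg hq, div_mul_comm]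
    exact mul_le_mul_of_nonneg_left (abs_sum_range_sub_sum_range_le ht hmn) (by positivity)
  have hmax : max ((∑ i ∈ Finset.range n, t i) / 2 * q) ((∑ i ∈ Finset.range m, t i) / 2 * q)
      ≤ S / 2 * q := by
    apply max_le <;> gcongr
  have hexponent : ∑ i ∈ Finset.range n, (q * c ^ i + δ * tailWeight c m i) * G i
      = q * S + δ * T := by
    simp only [S, T, add_mul, Finset.sum_add_distrib, Finset.mul_sum]
    congr 1 <;> refine Finset.sum_congr rfl fun i _ => by ring
  calc (exp ((∑ i ∈ Finset.range n, t i) / 2 * q) - exp ((∑ i ∈ Finset.range m, t i) / 2 * q)) ^ 2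
      ≤ (q / 2 * (c ^ m * T) * exp (S / 2 * q)) ^ 2 := by
        rw [← sq_abs]
        refine pow_le_pow_left₀ (abs_nonneg _) ((abs_exp_sub_exp_le _ _).trans ?_) 2
        exact mul_le_mul hdiff (exp_le_exp.2 hmax) (exp_pos _).le (by positivity)
    _ = q ^ 2 / 4 * (c ^ m) ^ 2 * T ^ 2 * exp (q * S) := by
        rw [mul_pow, sq (exp _), ← exp_add]; ring_nf
    _ ≤ q ^ 2 / 4 * (c ^ m) ^ 2 * (2 / δ ^ 2 * exp (δ * T)) * exp (q * S) := by
        gcongr; exact sq_le_mul_exp hδ hT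
    _ = _ := by
        rw [hexponent, exp_add]; field_simp; ring

end PartialSums

section Moments

variable {Ω : Type*} [MeasurableSpace Ω] {P : Measure Ω}

lemma eLpNorm_two_le_of_lintegral_sq_le {F : Ω → ℝ} {a : ℝ} (ha : 0 ≤ a)
    (h : ∫⁻ ω, ENNReal.ofReal (F ω ^ 2) ∂P ≤ ENNReal.ofReal (a ^ 2)) :
    eLpNorm F 2 P ≤ ENNReal.ofReal a := by
  have h2 := eLpNorm_nnreal_pow_eq_lintegral (f := F) (μ := P) (p := 2) two_ne_zero
  rw [← ENNReal.rpow_le_rpow_iff (z := 2) two_pos]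
  have hsq : ∀ ω, ‖F ω‖ₑ ^ (2 : ℝ) = ENNReal.ofReal (F ω ^ 2) := fun ω => by
    rw [Real.enorm_eq_ofReal_abs, ENNReal.ofReal_rpow_of_nonneg (abs_nonneg _) two_pos.le,
      Real.rpow_two, sq_abs]
  simp only [NNReal.coe_ofNat, ENNReal.coe_ofNat, hsq] at h2
  rwa [h2, ENNReal.ofReal_rpow_of_nonneg ha two_pos.le, Real.rpow_two]

variable [IsProbabilityMeasure P]

lemma lintegral_exp_mul_le {Z : Ω → ℝ} {l μ : ℝ} (hμ : 0 < μ) (hl : 0 ≤ l) (hlμ : l ≤ μ)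
    (hfin : ∫⁻ ω, ENNReal.ofReal (exp (μ * Z ω)) ∂P ≠ ∞) :
    ∫⁻ ω, ENNReal.ofReal (exp (l * Z ω)) ∂P
      ≤ ENNReal.ofReal (exp (l / μ * ((∫⁻ ω, ENNReal.ofReal (exp (μ * Z ω)) ∂P).toReal - 1))) := by
  set M := (∫⁻ ω, ENNReal.ofReal (exp (μ * Z ω)) ∂P).toReal
  have hM : ENNReal.ofReal M = ∫⁻ ω, ENNReal.ofReal (exp (μ * Z ω)) ∂P :=
    ENNReal.ofReal_toReal hfin
  have ht : 0 ≤ l / μ := div_nonneg hl hμ.le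
  have ht' : 0 ≤ 1 - l / μ := sub_nonneg.2 (div_le_one_of_le₀ hlμ hμ.le)
  calc ∫⁻ ω, ENNReal.ofReal (exp (l * Z ω)) ∂P
      ≤ ∫⁻ ω, (ENNReal.ofReal (1 - l / μ)
          + ENNReal.ofReal (l / μ) * ENNReal.ofReal (exp (μ * Z ω))) ∂P := by
        refine lintegral_mono fun ω => ?_
        rw [← ENNReal.ofReal_mul ht, ← ENNReal.ofReal_add ht' (by positivity)]
        exact ENNReal.ofReal_le_ofReal (exp_mul_le_one_sub_div_add_div_mul_exp hμ hl hlμ _)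
    _ = ENNReal.ofReal (1 - l / μ + l / μ * M) := by
        rw [lintegral_add_left measurable_const, lintegral_const, measure_univ, mul_one,
          lintegral_const_mul' _ _ ENNReal.ofReal_ne_top, ← hM, ← ENNReal.ofReal_mul ht,
          ← ENNReal.ofReal_add ht' (mul_nonneg ht ENNReal.toReal_nonneg)]
    _ ≤ ENNReal.ofReal (exp (l / μ * (M - 1))) :=
        ENNReal.ofReal_le_ofReal (by linarith [add_one_le_exp (l / μ * (M - 1))])

lemma one_le_toReal_lintegral_exp {Z : Ω → ℝ} (hZ : ∀ ω, 0 ≤ Z ω)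
    (hfin : ∫⁻ ω, ENNReal.ofReal (exp (Z ω)) ∂P ≠ ∞) :
    1 ≤ (∫⁻ ω, ENNReal.ofReal (exp (Z ω)) ∂P).toReal := by
  have h : (1 : ℝ≥0∞) ≤ ∫⁻ ω, ENNReal.ofReal (exp (Z ω)) ∂P := by
    calc (1 : ℝ≥0∞) = ∫⁻ _, ENNReal.ofReal 1 ∂P := by simp
      _ ≤ _ := lintegral_mono fun ω => ENNReal.ofReal_le_ofReal (one_le_exp (hZ ω))
  simpa using ENNReal.toReal_mono hfin h

lemma lintegral_mul_exp_sum_le {ξ : ℕ → Ω → ℝ} (hξ : ∀ i, Measurable (ξ i))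
    (hindep : iIndepFun ξ P) {Y : Ω → ℝ} (hident : ∀ i, IdentDistrib (ξ i) Y P P)
    {ψ : ℝ → ℝ≥0∞} (hψ : Measurable ψ) {h : ℝ → ℝ} (hh : Measurable h) (hh₀ : ∀ y, 0 ≤ h y)
    {μ Λ : ℝ} (hμ : 0 < μ) (hfin : ∫⁻ ω, ENNReal.ofReal (exp (μ * h (Y ω))) ∂P ≠ ∞)
    {lam : ℕ → ℝ} (hlam₀ : ∀ i, 0 ≤ lam i) (hlamμ : ∀ i, lam i ≤ μ) {n : ℕ}
    (hΛ : ∑ i ∈ Finset.range n, lam i ≤ μ * Λ) :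
    ∫⁻ ω, ψ (ξ 0 ω) * ENNReal.ofReal (exp (∑ i ∈ Finset.range n, lam i * h (ξ (i + 1) ω))) ∂P
      ≤ (∫⁻ ω, ψ (Y ω) ∂P) * ENNReal.ofReal
          (exp (Λ * ((∫⁻ ω, ENNReal.ofReal (exp (μ * h (Y ω))) ∂P).toReal - 1))) := by
  set M := (∫⁻ ω, ENNReal.ofReal (exp (μ * h (Y ω))) ∂P).toReal
  have hM : 1 ≤ M :=
    one_le_toReal_lintegral_exp (fun ω => mul_nonneg hμ.le (hh₀ _)) hfin
  let φ : ℕ → ℝ → ℝ≥0∞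
    | 0 => ψ
    | i + 1 => fun y => ENNReal.ofReal (exp (lam i * h y))
  have hφ : ∀ i, Measurable (φ i) := by
    rintro (_ | i)
    · exact hψ
    · exact ENNReal.measurable_ofReal.comp (measurable_exp.comp (hh.const_mul _))
  have hprod : ∀ ω, ψ (ξ 0 ω)
      * ENNReal.ofReal (exp (∑ i ∈ Finset.range n, lam i * h (ξ (i + 1) ω)))
      = ∏ i ∈ Finset.range (n + 1), φ i (ξ i ω) := by
    intro ω
    rw [Finset.prod_range_succ', exp_sum,
      ENNReal.ofReal_prod_of_nonneg fun _ _ => (exp_pos _).le, mul_comm]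
  calc ∫⁻ ω, ψ (ξ 0 ω) * ENNReal.ofReal (exp (∑ i ∈ Finset.range n, lam i * h (ξ (i + 1) ω))) ∂P
      = ∏ i ∈ Finset.range (n + 1), ∫⁻ ω, φ i (ξ i ω) ∂P := by
        simp_rw [hprod]
        exact lintegral_prod_eq_prod_lintegral_of_indepFun _ _ (hindep.comp φ hφ)
          fun i => (hφ i).comp (hξ i)
    _ = ∏ i ∈ Finset.range (n + 1), ∫⁻ ω, φ i (Y ω) ∂P :=
        Finset.prod_congr rfl fun i _ => ((hident i).comp (hφ i)).lintegral_eq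
    _ = (∫⁻ ω, ψ (Y ω) ∂P)
          * ∏ i ∈ Finset.range n, ∫⁻ ω, ENNReal.ofReal (exp (lam i * h (Y ω))) ∂P := by
        rw [Finset.prod_range_succ', mul_comm]
    _ ≤ (∫⁻ ω, ψ (Y ω) ∂P) * ∏ i ∈ Finset.range n, ENNReal.ofReal (exp (lam i / μ * (M - 1))) := by
        gcongr with i
        exact lintegral_exp_mul_le hμ (hlam₀ i) (hlamμ i) hfin
    _ ≤ (∫⁻ ω, ψ (Y ω) ∂P) * ENNReal.ofReal (exp (Λ * (M - 1))) := by
        rw [← ENNReal.ofReal_prod_of_nonneg fun _ _ => (exp_pos _).le, ← exp_sum,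
          ← Finset.sum_mul, ← Finset.sum_div]
        gcongr
        exact (div_le_iff₀' hμ).2 hΛ

lemma lintegral_rpow_abs_le_one_add {Y : Ω → ℝ} {p q : ℝ} (hp : 0 ≤ p) (hpq : p ≤ q)
    (hfin : ∫⁻ ω, ENNReal.ofReal (|Y ω| ^ q) ∂P ≠ ∞) :
    ∫⁻ ω, ENNReal.ofReal (|Y ω| ^ p) ∂P
      ≤ ENNReal.ofReal (1 + (∫⁻ ω, ENNReal.ofReal (|Y ω| ^ q) ∂P).toReal) := by
  calc ∫⁻ ω, ENNReal.ofReal (|Y ω| ^ p) ∂P ≤ ∫⁻ ω, (1 + ENNReal.ofReal (|Y ω| ^ q)) ∂P := by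
        refine lintegral_mono fun ω => ?_
        rw [← ENNReal.ofReal_one, ← ENNReal.ofReal_add zero_le_one (by positivity)]
        exact ENNReal.ofReal_le_ofReal (rpow_le_one_add_rpow (abs_nonneg _) hp hpq)
    _ = _ := by
        rw [lintegral_add_left measurable_const, lintegral_const, measure_univ, mul_one,
          ENNReal.ofReal_add zero_le_one ENNReal.toReal_nonneg, ENNReal.ofReal_one,
          ENNReal.ofReal_toReal hfin]

end Moments

def garchPartialSum {Ω : Type*} (ε : ℤ → Ω → ℝ) (c g : ℝ → ℝ) (k : ℤ) (m : ℕ) (ω : Ω) : ℝ :=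
  ∑ i ∈ Finset.range m, g (ε (k - (i + 1)) ω) * ∏ j ∈ Finset.range i, c (ε (k - (j + 1)) ω)

noncomputable def garchTruncation {Ω : Type*} (f : ℝ → ℝ) (ε : ℤ → Ω → ℝ) (c g : ℝ → ℝ) (k : ℤ)
    (m : ℕ) (ω : Ω) : ℝ :=
  f (exp (garchPartialSum ε c g k m ω / 2) * ε k ω)

section Garch

variable {Ω : Type*} {ε : ℤ → Ω → ℝ} {c g f : ℝ → ℝ}

lemma sq_garchTruncation_sub_le {ν : ℝ} (hf : IsPowerTransform f ν) (hν : 0 ≤ ν)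
    {c₀ δ : ℝ} (hc₀ : 0 ≤ c₀) (hδ : 0 < δ) {k : ℤ} {ω : Ω}
    (hcω : ∀ i : ℕ, |c (ε (k - (i + 1)) ω)| ≤ c₀) {m n : ℕ} (hmn : m ≤ n) :
    (garchTruncation f ε c g k n ω - garchTruncation f ε c g k m ω) ^ 2
      ≤ ν ^ 2 / (2 * δ ^ 2) * (c₀ ^ m) ^ 2 * (|ε k ω| ^ (2 * ν) * exp (∑ i ∈ Finset.range n,
          (ν * c₀ ^ i + δ * tailWeight c₀ m i) * |g (ε (k - (i + 1)) ω)|)) := by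
  have hscale : ∀ a, f (exp (a / 2) * ε k ω) = exp (a / 2 * ν) * f (ε k ω) := fun a => by
    rw [hf.map_mul (exp_pos _), ← exp_mul]
  have hf_sq : f (ε k ω) ^ 2 ≤ |ε k ω| ^ (2 * ν) := by
    rw [← sq_abs, mul_comm, rpow_mul (abs_nonneg _), rpow_two]
    exact pow_le_pow_left₀ (abs_nonneg _) (hf.abs_apply_le _) 2
  have hterm : ∀ i : ℕ, |g (ε (k - (i + 1)) ω) * ∏ j ∈ Finset.range i, c (ε (k - (j + 1)) ω)|
      ≤ c₀ ^ i * |g (ε (k - (i + 1)) ω)| := fun i => by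
    rw [abs_mul, Finset.abs_prod, mul_comm]
    gcongr
    calc ∏ j ∈ Finset.range i, |c (ε (k - (j + 1)) ω)| ≤ ∏ _j ∈ Finset.range i, c₀ :=
          Finset.prod_le_prod (fun _ _ => abs_nonneg _) fun j _ => hcω j
      _ = c₀ ^ i := by rw [Finset.prod_const, Finset.card_range]
  rw [garchTruncation, garchTruncation, hscale, hscale, ← sub_mul, mul_pow,
    mul_comm (|ε k ω| ^ (2 * ν)), ← mul_assoc]
  exact mul_le_mul (sq_exp_sum_range_sub_le hc₀ hν hδ (fun _ => abs_nonneg _) hterm hmn) hf_sq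
    (sq_nonneg _) (by positivity)

variable [MeasurableSpace Ω] {P : Measure Ω} [IsProbabilityMeasure P]

lemma measurable_garchTruncation (hf : Measurable f) (hc : Measurable c) (hg : Measurable g)
    (hε : ∀ k, Measurable (ε k)) (k : ℤ) (m : ℕ) : Measurable (garchTruncation f ε c g k m) := by
  have hX : Measurable (garchPartialSum ε c g k m) := by
    unfold garchPartialSum
    fun_prop
  exact hf.comp ((measurable_exp.comp (hX.div_const 2)).mul (hε k))

lemma lintegral_rpow_mul_exp_garchWeights_le (hg : Measurable g)
    (hεmeas : ∀ k, Measurable (ε k)) (hindep : iIndepFun ε P)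
    (hident : ∀ k, IdentDistrib (ε k) (ε 0) P P) {μ ν : ℝ} (hν : 0 < ν) (hμν : ν < μ)
    {c₀ : ℝ} (hc₀0 : 0 ≤ c₀) (hc₀1 : c₀ < 1)
    (hgmom : ∫⁻ ω, ENNReal.ofReal (exp (μ * |g (ε 0 ω)|)) ∂P < ⊤)
    (hεmom : ∫⁻ ω, ENNReal.ofReal (|ε 0 ω| ^ (2 * μ)) ∂P < ⊤) (k : ℤ) (m n : ℕ) :
    ∫⁻ ω, ENNReal.ofReal (|ε k ω| ^ (2 * ν)) * ENNReal.ofReal (exp (∑ i ∈ Finset.range n,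
        (ν * c₀ ^ i + (μ - ν) * tailWeight c₀ m i) * |g (ε (k - (i + 1)) ω)|)) ∂P
      ≤ ENNReal.ofReal (1 + (∫⁻ ω, ENNReal.ofReal (|ε 0 ω| ^ (2 * μ)) ∂P).toReal)
        * ENNReal.ofReal (exp ((1 - c₀)⁻¹
          * ((∫⁻ ω, ENNReal.ofReal (exp (μ * |g (ε 0 ω)|)) ∂P).toReal - 1))) := by
  have hδ : 0 ≤ μ - ν := sub_nonneg.2 hμν.le
  have hξ : iIndepFun (fun i : ℕ => ε (k - i)) P :=
    hindep.precomp fun i j hij => by simpa using hij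
  have hlamμ (i : ℕ) : ν * c₀ ^ i + (μ - ν) * tailWeight c₀ m i ≤ μ := by
    simpa using mul_pow_add_mul_tailWeight_le (m := m) hν.le hδ hc₀0 hc₀1.le i
  have hΛ : ∑ i ∈ Finset.range n, (ν * c₀ ^ i + (μ - ν) * tailWeight c₀ m i) ≤ μ * (1 - c₀)⁻¹ := by
    simpa [div_eq_mul_inv] using sum_range_mul_pow_add_mul_tailWeight_le hν.le hδ hc₀0 hc₀1 n
  have h := lintegral_mul_exp_sum_le (fun i => hεmeas _) hξ (fun i => hident _)
    (ψ := fun y => ENNReal.ofReal (|y| ^ (2 * ν))) (by fun_prop) (h := fun y => |g y|)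
    (by fun_prop) (fun _ => abs_nonneg _) (hν.trans hμν) hgmom.ne
    (fun i => add_nonneg (by positivity) (mul_nonneg hδ (tailWeight_nonneg hc₀0 i))) hlamμ hΛ
  simp only [Nat.cast_zero, sub_zero, Nat.cast_add, Nat.cast_one] at h
  refine h.trans ?_
  gcongr
  exact lintegral_rpow_abs_le_one_add (by positivity) (by linarith) hεmom.ne

lemma exists_eLpNorm_garchTruncation_sub_le (hc : Measurable c) (hg : Measurable g)
    (hεmeas : ∀ k, Measurable (ε k)) (hindep : iIndepFun ε P)
    (hident : ∀ k, IdentDistrib (ε k) (ε 0) P P) {μ ν : ℝ} (hν : 0 < ν) (hμν : ν < μ)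
    {c₀ : ℝ} (hc₀0 : 0 ≤ c₀) (hc₀1 : c₀ < 1) (hcbd : ∀ᵐ ω ∂P, |c (ε 0 ω)| ≤ c₀)
    (hgmom : ∫⁻ ω, ENNReal.ofReal (exp (μ * |g (ε 0 ω)|)) ∂P < ⊤)
    (hεmom : ∫⁻ ω, ENNReal.ofReal (|ε 0 ω| ^ (2 * μ)) ∂P < ⊤) (hf : IsPowerTransform f ν) :
    ∃ C > (0 : ℝ), ∀ (k : ℤ) (m n : ℕ), m ≤ n →
      eLpNorm (fun ω => garchTruncation f ε c g k n ω - garchTruncation f ε c g k m ω) 2 P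
        ≤ ENNReal.ofReal (C * c₀ ^ m) := by
  set δ := μ - ν
  have hδ : 0 < δ := sub_pos.2 hμν
  set Bε := (∫⁻ ω, ENNReal.ofReal (|ε 0 ω| ^ (2 * μ)) ∂P).toReal
  set Mg := (∫⁻ ω, ENNReal.ofReal (exp (μ * |g (ε 0 ω)|)) ∂P).toReal
  set A := ν ^ 2 / (2 * δ ^ 2) * ((1 + Bε) * exp ((1 - c₀)⁻¹ * (Mg - 1)))
  have hA : 0 < A := by positivity
  refine ⟨√A, sqrt_pos.2 hA, fun k m n hmn => ?_⟩
  have hcω : ∀ᵐ ω ∂P, ∀ i : ℕ, |c (ε (k - (i + 1)) ω)| ≤ c₀ := ae_all_iff.2 fun i =>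
    (hident _).symm.ae_snd (measurableSet_le hc.abs measurable_const) hcbd
  apply eLpNorm_two_le_of_lintegral_sq_le (by positivity)
  calc ∫⁻ ω, ENNReal.ofReal ((garchTruncation f ε c g k n ω - garchTruncation f ε c g k m ω) ^ 2) ∂P
      ≤ ∫⁻ ω, ENNReal.ofReal (ν ^ 2 / (2 * δ ^ 2) * (c₀ ^ m) ^ 2)
          * (ENNReal.ofReal (|ε k ω| ^ (2 * ν)) * ENNReal.ofReal (exp (∑ i ∈ Finset.range n,
            (ν * c₀ ^ i + δ * tailWeight c₀ m i) * |g (ε (k - (i + 1)) ω)|))) ∂P := by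
        refine lintegral_mono_ae (hcω.mono fun ω hω => ?_)
        rw [← ENNReal.ofReal_mul (by positivity), ← ENNReal.ofReal_mul (by positivity)]
        exact ENNReal.ofReal_le_ofReal
          (sq_garchTruncation_sub_le hf hν.le hc₀0 hδ hω hmn)
    _ ≤ ENNReal.ofReal (ν ^ 2 / (2 * δ ^ 2) * (c₀ ^ m) ^ 2)
          * (ENNReal.ofReal (1 + Bε) * ENNReal.ofReal (exp ((1 - c₀)⁻¹ * (Mg - 1)))) := by
        rw [lintegral_const_mul' _ _ ENNReal.ofReal_ne_top]
        gcongr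
        exact lintegral_rpow_mul_exp_garchWeights_le hg hεmeas hindep hident hν hμν hc₀0 hc₀1
          hgmom hεmom k m n
    _ = ENNReal.ofReal ((√A * c₀ ^ m) ^ 2) := by
        rw [← ENNReal.ofReal_mul (by positivity), ← ENNReal.ofReal_mul (by positivity), mul_pow,
          sq_sqrt hA.le]
        congr 1
        ring

end Garch

theorem exponential_garch_L2_approximation_general
    {Ω : Type*} [MeasurableSpace Ω] (P : Measure Ω) [IsProbabilityMeasure P]
    (ε : ℤ → Ω → ℝ) (c g : ℝ → ℝ)
    (hc : Measurable c) (hg : Measurable g)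
    (hεmeas : ∀ k, Measurable (ε k))
    (hindep : iIndepFun ε P)
    (hident : ∀ k, IdentDistrib (ε k) (ε 0) P P)
    (μ ν : ℝ) (hν : 0 < ν) (hμν : ν < μ)
    (c₀ : ℝ) (hc₀0 : 0 ≤ c₀) (hc₀1 : c₀ < 1)
    (hcbd : ∀ᵐ ω ∂P, |c (ε 0 ω)| ≤ c₀)
    (hgmom : ∫⁻ ω, ENNReal.ofReal (Real.exp (μ * |g (ε 0 ω)|)) ∂P < ⊤)
    (hεmom : ∫⁻ ω, ENNReal.ofReal (|ε 0 ω| ^ (2 * μ)) ∂P < ⊤)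
    (f : ℝ → ℝ)
    (hf : (∀ x, f x = |x| ^ ν) ∨ (∀ x, f x = Real.sign x * |x| ^ ν))
    (X : ℤ → Ω → ℝ)
    (hX : ∀ k : ℤ, ∀ᵐ ω ∂P, Tendsto
      (fun m => ∑ i ∈ Finset.range m,
        g (ε (k - (i + 1)) ω) * ∏ j ∈ Finset.range i, c (ε (k - (j + 1)) ω))
      atTop (nhds (X k ω)))
    (Xm : ℤ → ℕ → Ω → ℝ)
    (hXm : ∀ k m ω, Xm k m ω = ∑ i ∈ Finset.range m,
      g (ε (k - (i + 1)) ω) * ∏ j ∈ Finset.range i, c (ε (k - (j + 1)) ω))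
    (η : ℤ → Ω → ℝ) (hη : ∀ k ω, η k ω = f (Real.exp (X k ω / 2) * ε k ω))
    (ηm : ℤ → ℕ → Ω → ℝ)
    (hηm : ∀ k m ω, ηm k m ω = f (Real.exp (Xm k m ω / 2) * ε k ω)) :
    ∃ C₂ > (0 : ℝ),
      ∀ k : ℤ, ∀ m : ℕ, 1 ≤ m →
        eLpNorm (fun ω => η k ω - ηm k m ω) 2 P ≤ ENNReal.ofReal (C₂ * c₀ ^ m) := by
  replace hf : IsPowerTransform f ν := hf
  obtain ⟨C, hC, hcauchy⟩ := exists_eLpNorm_garchTruncation_sub_le hc hg hεmeas hindep hident hν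
    hμν hc₀0 hc₀1 hcbd hgmom hεmom hf
  refine ⟨C, hC, fun k m _ => ?_⟩
  have hηm' : ∀ n, ηm k n = garchTruncation f ε c g k n := fun n => funext fun ω => by
    rw [hηm, hXm]
    rfl
  have hlim : ∀ᵐ ω ∂P, Tendsto (fun n => ηm k n ω - ηm k m ω) atTop (𝓝 (η k ω - ηm k m ω)) := by
    filter_upwards [hX k] with ω hω
    simp only [hη, hηm, hXm, hf.map_mul (exp_pos _)]
    exact ((((continuous_exp.tendsto _).comp (hω.div_const 2)).rpow_const
      (Or.inl (exp_pos _).ne')).mul_const _).sub_const _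
  have hmeas : ∀ n, AEStronglyMeasurable (fun ω => ηm k n ω - ηm k m ω) P := fun n => by
    simp only [hηm']
    exact ((measurable_garchTruncation hf.measurable hc hg hεmeas k n).sub
      (measurable_garchTruncation hf.measurable hc hg hεmeas k m)).aestronglyMeasurable
  calc eLpNorm (fun ω => η k ω - ηm k m ω) 2 P
      ≤ atTop.liminf fun n => eLpNorm (fun ω => ηm k n ω - ηm k m ω) 2 P :=
        Lp.eLpNorm_lim_le_liminf_eLpNorm hmeas _ hlim
    _ ≤ ENNReal.ofReal (C * c₀ ^ m) := liminf_le_of_frequently_le' <|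
        ((eventually_ge_atTop m).mono fun n hn => by
          simpa only [hηm'] using hcauchy k m n hn).frequently

/-- **Lemma 2.** For an exponential augmented GARCH process (`σ_k² = exp X_k`,
`y_k = exp(X_k/2) ε_k`, with truncated versions built from the partial sums `X_{k,m}`):
if `|c(ε₀)| ≤ c < 1` a.s., `E exp(μ|g(ε₀)|) < ∞`, `E|ε₀|^{2μ} < ∞`, `E η₀² < ∞` and
`μ > ν`, then there is `C₂ > 0` with `‖η_k − η_{k,m}‖₂ ≤ C₂ c^m` for all `k`, `m ≥ 1`. -/
theorem exponential_garch_L2_approximation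
    {Ω : Type*} [MeasurableSpace Ω] (P : Measure Ω) [IsProbabilityMeasure P]
    (ε : ℤ → Ω → ℝ) (c g : ℝ → ℝ)
    (hc : Measurable c) (hg : Measurable g)
    (hεmeas : ∀ k, Measurable (ε k))
    (hindep : iIndepFun ε P)
    (hident : ∀ k, IdentDistrib (ε k) (ε 0) P P)
    (μ ν : ℝ) (hν : 0 < ν) (hμν : ν < μ)
    (c₀ : ℝ) (hc₀0 : 0 ≤ c₀) (hc₀1 : c₀ < 1)
    (hcbd : ∀ᵐ ω ∂P, |c (ε 0 ω)| ≤ c₀)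
    (hgmom : ∫⁻ ω, ENNReal.ofReal (Real.exp (μ * |g (ε 0 ω)|)) ∂P < ⊤)
    (hεmom : ∫⁻ ω, ENNReal.ofReal (|ε 0 ω| ^ (2 * μ)) ∂P < ⊤)
    (f : ℝ → ℝ)
    (hf : (∀ x, f x = |x| ^ ν) ∨ (∀ x, f x = Real.sign x * |x| ^ ν))
    (X : ℤ → Ω → ℝ) (hXmeas : ∀ k, Measurable (X k))
    (hX : ∀ k : ℤ, ∀ᵐ ω ∂P, Tendsto
      (fun m => ∑ i ∈ Finset.range m,
        g (ε (k - (i + 1)) ω) * ∏ j ∈ Finset.range i, c (ε (k - (j + 1)) ω))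
      atTop (nhds (X k ω)))
    (Xm : ℤ → ℕ → Ω → ℝ)
    (hXm : ∀ k m ω, Xm k m ω = ∑ i ∈ Finset.range m,
      g (ε (k - (i + 1)) ω) * ∏ j ∈ Finset.range i, c (ε (k - (j + 1)) ω))
    (η : ℤ → Ω → ℝ) (hη : ∀ k ω, η k ω = f (Real.exp (X k ω / 2) * ε k ω))
    (ηm : ℤ → ℕ → Ω → ℝ)
    (hηm : ∀ k m ω, ηm k m ω = f (Real.exp (Xm k m ω / 2) * ε k ω))
    (hmom : ∫⁻ ω, ENNReal.ofReal ((η 0 ω) ^ 2) ∂P < ⊤) :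
    ∃ C₂ > (0 : ℝ),
      ∀ k : ℤ, ∀ m : ℕ, 1 ≤ m →
        eLpNorm (fun ω => η k ω - ηm k m ω) 2 P ≤ ENNReal.ofReal (C₂ * c₀ ^ m) :=
  exponential_garch_L2_approximation_general P ε c g hc hg hεmeas hindep hident μ ν hν hμν c₀ hc₀0
    hc₀1 hcbd hgmom hεmom f hf X hX Xm hXm η hη ηm hηm
end

section
/- Assume the series X₀ converges almost surely and that −∞ < E[log|c(ε₀)|] < 0. For m ≥ 1 set T_m = ∑_{i=1}^m (log|c(ε_i)| − E[log|c(ε₀)|]). Then there exist constants C₃, C₄ > 0, not depending on m, and α₀ > 0 such that for every 0 < α ≤ α₀, every k ∈ ℤ and every m ≥ 1, P(|X_k − X_{k,m}| > e^{−αm}) ≤ P(T_m > C₃ m) + P(|X₀| > e^{C₄ m}). -/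
/-!
Peeling off the first `m` terms of the series gives, almost surely,
`X_k − X_{k,m} = (∏_{j<m} c(ε_{k−1−j})) · X_{k−m}`. With `μ = E log|c(ε₀)|`, outside the events
`∑_{j<m} log|c(ε_{k−1−j})| > (μ + C₃) m` and `|X_{k−m}| > e^{C₄ m}` the right side is at most
`e^{(μ + C₃ + C₄) m} ≤ e^{−αm}`, taking `C₃ = −μ/2` and `C₄ = α₀ = −μ/4`. Since the `ε_k` are
i.i.d., every injective reindexing of them has the same joint law: the first event therefore has
the probability of `T_m > C₃ m`, and `X_{k−m}`, a measurable function of `(ε_{k−m−1−i})_i`, has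
the law of `X₀`.
-/

open MeasureTheory ProbabilityTheory Filter Finset Topology

namespace ProbabilityTheory

variable {Ω ι κ β : Type*} [MeasurableSpace Ω] [MeasurableSpace β] {P : Measure Ω}
  {ε : ι → Ω → β}

lemma iIndepFun.map_reindex_eq_infinitePi (hmeas : ∀ i, Measurable (ε i))
    (hindep : iIndepFun ε P) {i₀ : ι} (hident : ∀ i, IdentDistrib (ε i) (ε i₀) P P)
    {φ : κ → ι} (hφ : φ.Injective) :
    P.map (fun ω k ↦ ε (φ k) ω) = Measure.infinitePi (fun _ : κ ↦ P.map (ε i₀)) := by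
  rw [(hindep.precomp hφ).map_fun_eq_infinitePi_map fun k ↦ hmeas (φ k)]
  simp_rw [(hident _).map_eq]

lemma iIndepFun.identDistrib_reindex (hmeas : ∀ i, Measurable (ε i))
    (hindep : iIndepFun ε P) {i₀ : ι} (hident : ∀ i, IdentDistrib (ε i) (ε i₀) P P)
    {φ ψ : κ → ι} (hφ : φ.Injective) (hψ : ψ.Injective) :
    IdentDistrib (fun ω k ↦ ε (φ k) ω) (fun ω k ↦ ε (ψ k) ω) P P where
  aemeasurable_fst := (measurable_pi_lambda _ fun k ↦ hmeas (φ k)).aemeasurable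
  aemeasurable_snd := (measurable_pi_lambda _ fun k ↦ hmeas (ψ k)).aemeasurable
  map_eq := by
    rw [hindep.map_reindex_eq_infinitePi hmeas hident hφ,
      hindep.map_reindex_eq_infinitePi hmeas hident hψ]

end ProbabilityTheory

lemma Finset.abs_prod_le_exp_sum_log {α : Type*} (s : Finset α) (f : α → ℝ) :
    |∏ j ∈ s, f j| ≤ Real.exp (∑ j ∈ s, Real.log |f j|) := by
  rw [Finset.abs_prod, Real.exp_sum]
  exact Finset.prod_le_prod (fun j _ ↦ abs_nonneg _) fun j _ ↦ Real.le_exp_log _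

lemma Finset.abs_prod_mul_le_exp_add {α : Type*} {s : Finset α} {f : α → ℝ} {x a b : ℝ}
    (ha : ∑ j ∈ s, Real.log |f j| ≤ a) (hb : |x| ≤ Real.exp b) :
    |(∏ j ∈ s, f j) * x| ≤ Real.exp (a + b) := by
  rw [abs_mul, Real.exp_add]
  exact mul_le_mul ((s.abs_prod_le_exp_sum_log f).trans (Real.exp_le_exp.mpr ha)) hb
    (abs_nonneg x) (Real.exp_pos a).le

namespace AugmentedGarch

variable (c g : ℝ → ℝ)

def partialSum (n : ℕ) (y : ℕ → ℝ) : ℝ :=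
  ∑ i ∈ range n, g (y i) * ∏ j ∈ range i, c (y j)

noncomputable def seriesSum (y : ℕ → ℝ) : ℝ :=
  limUnder atTop (partialSum c g · y)

lemma partialSum_add (m n : ℕ) (y : ℕ → ℝ) :
    partialSum c g (m + n) y =
      partialSum c g m y + (∏ j ∈ range m, c (y j)) * partialSum c g n (fun i ↦ y (m + i)) := by
  simp only [partialSum, sum_range_add, prod_range_add, mul_sum]
  congr 1
  exact sum_congr rfl fun i _ ↦ by ring

variable {c g}

lemma sub_partialSum_eq_prod_mul {m : ℕ} {y : ℕ → ℝ} {x x' : ℝ}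
    (hx : Tendsto (partialSum c g · y) atTop (𝓝 x))
    (hx' : Tendsto (partialSum c g · fun i ↦ y (m + i)) atTop (𝓝 x')) :
    x - partialSum c g m y = (∏ j ∈ range m, c (y j)) * x' := by
  have htail : Tendsto (fun n ↦ partialSum c g (m + n) y) atTop (𝓝 x) :=
    hx.comp (tendsto_atTop_atTop_of_monotone (fun _ _ h ↦ by omega) fun n ↦ ⟨n, by omega⟩)
  simp_rw [partialSum_add] at htail
  have := tendsto_nhds_unique htail (tendsto_const_nhds.add (hx'.const_mul _))
  linarith

lemma measurable_partialSum (hc : Measurable c) (hg : Measurable g) (n : ℕ) :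
    Measurable (partialSum c g n) :=
  Finset.measurable_sum _ fun i _ ↦ (hg.comp (measurable_pi_apply i)).mul
    (Finset.measurable_prod _ fun j _ ↦ hc.comp (measurable_pi_apply j))

lemma measurable_seriesSum (hc : Measurable c) (hg : Measurable g) :
    Measurable (seriesSum c g) :=
  (StronglyMeasurable.limUnder fun n ↦
    (measurable_partialSum hc hg n).stronglyMeasurable).measurable

variable {Ω : Type*} {ε : ℤ → Ω → ℝ}

def pastInnovations (ε : ℤ → Ω → ℝ) (k : ℤ) (ω : Ω) (i : ℕ) : ℝ :=
  ε (k - (i + 1)) ω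

lemma pastInnovations_add (k : ℤ) (m : ℕ) (ω : Ω) :
    (fun i ↦ pastInnovations ε k ω (m + i)) = pastInnovations ε (k - m) ω := by
  funext i
  simp only [pastInnovations]
  congr 1
  push_cast
  ring

section Stationarity

variable [MeasurableSpace Ω] {P : Measure Ω} (hmeas : ∀ k, Measurable (ε k))
  (hindep : iIndepFun ε P) (hident : ∀ k, IdentDistrib (ε k) (ε 0) P P)
include hmeas hindep hident

lemma measure_lt_sum_log_pastInnovations (c : ℝ → ℝ) (hc : Measurable c) (k : ℤ) (m : ℕ)
    (t : ℝ) :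
    P {ω | t < ∑ j ∈ range m, Real.log |c (pastInnovations ε k ω j)|} =
      P {ω | t < ∑ j ∈ range m, Real.log |c (ε (j + 1) ω)|} := by
  have hφ : (fun i : ℕ ↦ k - (i + 1)).Injective := fun a b h ↦ by simp only at h; omega
  have hψ : (fun i : ℕ ↦ (i : ℤ) + 1).Injective := fun a b h ↦ by simp only at h; omega
  refine (hindep.identDistrib_reindex hmeas hident hφ hψ).measure_mem_eq
    (s := {y | t < ∑ j ∈ range m, Real.log |c (y j)|}) (measurableSet_lt measurable_const ?_)
  exact Finset.measurable_sum _ fun j _ ↦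
    Real.measurable_log.comp (hc.comp (measurable_pi_apply j)).abs

lemma identDistrib_of_tendsto_partialSum {c g : ℝ → ℝ} (hc : Measurable c) (hg : Measurable g)
    {X : ℤ → Ω → ℝ}
    (hX : ∀ k, ∀ᵐ ω ∂P, Tendsto (partialSum c g · (pastInnovations ε k ω)) atTop (𝓝 (X k ω)))
    (k k' : ℤ) :
    IdentDistrib (X k) (X k') P P := by
  have hφ : ∀ k : ℤ, (fun i : ℕ ↦ k - (i + 1)).Injective := fun k a b h ↦ by
    simp only at h; omega
  have hS : ∀ k, seriesSum c g ∘ pastInnovations ε k =ᵐ[P] X k := fun k ↦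
    (hX k).mono fun ω h ↦ h.limUnder_eq
  have hmS : ∀ k, AEMeasurable (seriesSum c g ∘ pastInnovations ε k) P := fun k ↦
    ((measurable_seriesSum hc hg).comp (measurable_pi_lambda _ fun i ↦ hmeas _)).aemeasurable
  exact (IdentDistrib.of_ae_eq (hmS k) (hS k)).symm.trans <|
    ((hindep.identDistrib_reindex hmeas hident (hφ k) (hφ k')).comp
      (measurable_seriesSum hc hg)).trans (IdentDistrib.of_ae_eq (hmS k') (hS k'))

end Stationarity

end AugmentedGarch

open AugmentedGarch in
theorem augmented_garch_tail_approximation_general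
    {Ω : Type*} [MeasurableSpace Ω] (P : Measure Ω) [IsProbabilityMeasure P]
    (ε : ℤ → Ω → ℝ) (c g : ℝ → ℝ)
    (hc : Measurable c) (hg : Measurable g)
    (hεmeas : ∀ k, Measurable (ε k))
    (hindep : iIndepFun ε P)
    (hident : ∀ k, IdentDistrib (ε k) (ε 0) P P)
    (hlogneg : ∫ ω, Real.log |c (ε 0 ω)| ∂P < 0)
    (X : ℤ → Ω → ℝ)
    (hX : ∀ k : ℤ, ∀ᵐ ω ∂P, Tendsto
      (fun m => ∑ i ∈ Finset.range m,
        g (ε (k - (i + 1)) ω) * ∏ j ∈ Finset.range i, c (ε (k - (j + 1)) ω))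
      atTop (nhds (X k ω)))
    (Xm : ℤ → ℕ → Ω → ℝ)
    (hXm : ∀ k m ω, Xm k m ω = ∑ i ∈ Finset.range m,
      g (ε (k - (i + 1)) ω) * ∏ j ∈ Finset.range i, c (ε (k - (j + 1)) ω))
    (T : ℕ → Ω → ℝ)
    (hT : ∀ m ω, T m ω = ∑ i ∈ Finset.range m,
      (Real.log |c (ε ((i : ℤ) + 1) ω)| - ∫ ω', Real.log |c (ε 0 ω')| ∂P)) :
    ∃ C₃ > (0 : ℝ), ∃ C₄ > (0 : ℝ), ∃ α₀ > (0 : ℝ), ∀ α : ℝ, 0 < α → α ≤ α₀ →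
      ∀ k : ℤ, ∀ m : ℕ, 1 ≤ m →
        P {ω | |X k ω - Xm k m ω| > Real.exp (-α * m)} ≤
          P {ω | T m ω > C₃ * m} + P {ω | |X 0 ω| > Real.exp (C₄ * m)} := by
  set μ := ∫ ω, Real.log |c (ε 0 ω)| ∂P
  refine ⟨-μ / 2, by linarith, -μ / 4, by linarith, -μ / 4, by linarith, fun α _ hα k m _ ↦ ?_⟩
  set A : Set Ω := {ω | μ / 2 * m < ∑ j ∈ range m, Real.log |c (pastInnovations ε k ω j)|}
  set B : Set Ω := {ω | |X (k - m) ω| > Real.exp (-μ / 4 * m)}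
  have hcover : {ω | |X k ω - Xm k m ω| > Real.exp (-α * m)} ≤ᵐ[P] (A ∪ B : Set Ω) := by
    filter_upwards [hX k, hX (k - m)] with ω hk hkm hlarge
    have hid : X k ω - Xm k m ω = (∏ j ∈ range m, c (pastInnovations ε k ω j)) * X (k - m) ω := by
      rw [hXm]
      exact sub_partialSum_eq_prod_mul (y := pastInnovations ε k ω) hk
        (by rwa [pastInnovations_add])
    show ω ∈ A ∪ B
    by_contra hAB
    obtain ⟨hA, hB⟩ := not_or.mp hAB
    refine not_lt.mpr ?_ hlarge
    calc |X k ω - Xm k m ω| ≤ Real.exp (μ / 2 * m + -μ / 4 * m) := by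
          rw [hid]; exact Finset.abs_prod_mul_le_exp_add (not_lt.mp hA) (not_lt.mp hB)
      _ ≤ Real.exp (-α * m) := Real.exp_le_exp.mpr (by nlinarith [(m.cast_nonneg : (0 : ℝ) ≤ m)])
  have hA : P A = P {ω | T m ω > -μ / 2 * m} := by
    rw [measure_lt_sum_log_pastInnovations hεmeas hindep hident c hc]
    congr 1
    ext ω
    simp only [Set.mem_ofPred_eq, hT, sum_sub_distrib, sum_const, card_range, nsmul_eq_mul]
    constructor <;> intro h <;> linarith
  have hB : P B = P {ω | |X 0 ω| > Real.exp (-μ / 4 * m)} :=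
    (identDistrib_of_tendsto_partialSum hεmeas hindep hident hc hg hX (k - m) 0).measure_mem_eq
      (s := {x | |x| > Real.exp (-μ / 4 * m)}) (measurableSet_lt measurable_const measurable_abs)
  calc P {ω | |X k ω - Xm k m ω| > Real.exp (-α * m)} ≤ P (A ∪ B) := measure_mono_ae hcover
    _ ≤ P A + P B := measure_union_le A B
    _ = _ := by rw [hA, hB]

/-- **Lemma 3.** If `−∞ < E log|c(ε₀)| < 0`, then with
`T_m = ∑_{i=1}^m (log|c(ε_i)| − E log|c(ε₀)|)` there are constants `C₃, C₄ > 0` and some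
`α₀ > 0` such that for every `0 < α ≤ α₀`, every `k` and every `m ≥ 1`,
`P(|X_k − X_{k,m}| > e^{−αm}) ≤ P(T_m > C₃ m) + P(|X₀| > e^{C₄ m})`. -/
theorem augmented_garch_tail_approximation
    {Ω : Type*} [MeasurableSpace Ω] (P : Measure Ω) [IsProbabilityMeasure P]
    (ε : ℤ → Ω → ℝ) (c g : ℝ → ℝ)
    (hc : Measurable c) (hg : Measurable g)
    (hεmeas : ∀ k, Measurable (ε k))
    (hindep : iIndepFun ε P)
    (hident : ∀ k, IdentDistrib (ε k) (ε 0) P P)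
    (hlogint : Integrable (fun ω => Real.log |c (ε 0 ω)|) P)
    (hlogneg : ∫ ω, Real.log |c (ε 0 ω)| ∂P < 0)
    (X : ℤ → Ω → ℝ) (hXmeas : ∀ k, Measurable (X k))
    (hX : ∀ k : ℤ, ∀ᵐ ω ∂P, Tendsto
      (fun m => ∑ i ∈ Finset.range m,
        g (ε (k - (i + 1)) ω) * ∏ j ∈ Finset.range i, c (ε (k - (j + 1)) ω))
      atTop (nhds (X k ω)))
    (Xm : ℤ → ℕ → Ω → ℝ)
    (hXm : ∀ k m ω, Xm k m ω = ∑ i ∈ Finset.range m,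
      g (ε (k - (i + 1)) ω) * ∏ j ∈ Finset.range i, c (ε (k - (j + 1)) ω))
    (T : ℕ → Ω → ℝ)
    (hT : ∀ m ω, T m ω = ∑ i ∈ Finset.range m,
      (Real.log |c (ε ((i : ℤ) + 1) ω)| - ∫ ω', Real.log |c (ε 0 ω')| ∂P)) :
    ∃ C₃ > (0 : ℝ), ∃ C₄ > (0 : ℝ), ∃ α₀ > (0 : ℝ), ∀ α : ℝ, 0 < α → α ≤ α₀ →
      ∀ k : ℤ, ∀ m : ℕ, 1 ≤ m →
        P {ω | |X k ω - Xm k m ω| > Real.exp (-α * m)} ≤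
          P {ω | T m ω > C₃ * m} + P {ω | |X 0 ω| > Real.exp (C₄ * m)} :=
  augmented_garch_tail_approximation_general P ε c g hc hg hεmeas hindep hident hlogneg X hX Xm hXm
    T hT
end
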